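/- arXiv:2203.14729 — 13 statements merged into one kernel-verified Lean document; each statement's English description precedes it below -/
import Mathlib

section
/- Let K be a noncompact locally compact Hausdorff space in which every σ-compact subset has compact closure (i.e., K is of class K_IV). Then there is no frame in C₀(K): there exist no index set J, no family (x_j)_{j∈J} of elements of C₀(K), and no constants 0 < c₁ ≤ c₂ forming a pointwise frame, i.e., such that for every t ∈ K the family (|x_j(t)|²)_{j∈J} is summable and c₁ ≤ Σ_{j∈J} |x_j(t)|² ≤ c₂. -/
/-!
The cozero sets `{x j ≠ 0}` of a frame form a cover of `K` by open `σ`-compact sets, and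
summability of `∑ j, ‖x j t‖ ^ 2` makes it point-countable. In a noncompact space of class
`K_IV` no such cover exists: since no `σ`-compact set exhausts `K`, one chooses points
`t₀, t₁, …` such that `tₙ` avoids the `σ`-compact union of all cover members through earlier
points. The closure of `{tₙ}` is compact, so finitely many members cover all `tₙ`, yet no
member contains two of them.
-/

open ZeroAtInfty Set Function

universe u

namespace ZeroAtInftyContinuousMap

variable {X E : Type*} [TopologicalSpace X] [NormedAddCommGroup E]

theorem isCompact_setOf_le_norm (f : C₀(X, E)) {ε : ℝ} (hε : 0 < ε) :
    IsCompact {t | ε ≤ ‖f t‖} := by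
  obtain ⟨C, hC, hCsub⟩ :=
    Filter.mem_cocompact.mp (zero_at_infty f (Metric.ball_mem_nhds 0 hε))
  refine hC.of_isClosed_subset (isClosed_le continuous_const (map_continuous f).norm) ?_
  intro t ht
  by_contra htC
  exact (mem_ball_zero_iff.mp (hCsub htC)).not_ge ht

theorem isSigmaCompact_support (f : C₀(X, E)) : IsSigmaCompact (support f) := by
  have hsupp : support f = ⋃ n : ℕ, {t | 1 / ((n : ℝ) + 1) ≤ ‖f t‖} := by
    ext t
    simp only [mem_support, mem_iUnion, mem_ofPred_eq, ← norm_pos_iff]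
    refine ⟨fun h => (exists_nat_one_div_lt h).imp fun _ => le_of_lt, ?_⟩
    rintro ⟨n, hn⟩
    exact lt_of_lt_of_le (by positivity) hn
  rw [hsupp]
  exact isSigmaCompact_iUnion_of_isCompact _ fun n => f.isCompact_setOf_le_norm (by positivity)

end ZeroAtInftyContinuousMap

section SigmaCompactCover

variable {X : Type*} [TopologicalSpace X]

theorem exists_seq_notMem_apply_of_lt (hX : ∀ s : Set X, IsSigmaCompact s → ∃ p, p ∉ s)
    (S : X → Set X) (hS : ∀ p, IsSigmaCompact (S p)) :
    ∃ t : ℕ → X, ∀ m n, m < n → t n ∉ S (t m) := by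
  choose pick hpick using fun s : {s : Set X // IsSigmaCompact s} => hX s s.2
  let grow : {s : Set X // IsSigmaCompact s} → {s : Set X // IsSigmaCompact s} :=
    fun s => ⟨s ∪ S (pick s), by
      rw [union_eq_iUnion]
      exact isSigmaCompact_iUnion _ fun b => by cases b <;> simp [s.2, hS]⟩
  let A : ℕ → {s : Set X // IsSigmaCompact s} := fun n => grow^[n] ⟨∅, isSigmaCompact_empty⟩
  have hA : Monotone fun n => (A n).1 := monotone_nat_of_le_succ fun n => by
    simp only [A, iterate_succ_apply']
    exact subset_union_left
  refine ⟨fun n => pick (A n), fun m n hmn hmem => hpick (A n) ?_⟩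
  have hstep : S (pick (A m)) ⊆ (A (m + 1)).1 := by
    simp only [A, iterate_succ_apply']
    exact subset_union_right
  exact hA hmn (hstep hmem)

theorem iUnion_ne_univ_of_countable_setOf_mem (hnc : ¬ CompactSpace X)
    (hIV : ∀ s : Set X, IsSigmaCompact s → IsCompact (closure s))
    {J : Type*} (U : J → Set X) (hUo : ∀ j, IsOpen (U j)) (hUσ : ∀ j, IsSigmaCompact (U j))
    (hcount : ∀ p, {j | p ∈ U j}.Countable) : ⋃ j, U j ≠ univ := by
  intro hcover
  have hX : ∀ s : Set X, IsSigmaCompact s → ∃ p, p ∉ s := fun s hs => by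
    by_contra! hall
    exact hnc (isCompact_univ_iff.mp (by simpa [eq_univ_of_forall hall] using hIV s hs))
  obtain ⟨t, ht⟩ := exists_seq_notMem_apply_of_lt hX (fun p => ⋃ j ∈ {j | p ∈ U j}, U j)
    fun p => isSigmaCompact_biUnion (hcount p) fun j _ => hUσ j
  have hrange : IsSigmaCompact (range t) := by
    rw [range_eq_iUnion]
    exact isSigmaCompact_iUnion_of_isCompact _ fun _ => isCompact_singleton
  obtain ⟨G, hG⟩ := (hIV _ hrange).elim_finite_subcover U hUo (hcover ▸ subset_univ _)
  have hmem : ∀ n, ∃ j : G, t n ∈ U j := fun n => by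
    simpa using hG (subset_closure (mem_range_self n))
  choose g hg using hmem
  refine not_injective_infinite_finite g fun m n hgmn => ?_
  by_contra hmn
  rcases Ne.lt_or_gt hmn with h | h
  · exact ht m n h (mem_biUnion (hg m) (hgmn ▸ hg n))
  · exact ht n m h (mem_biUnion (hg n) (hgmn ▸ hg m))

end SigmaCompactCover

theorem no_frame_of_KIV_general
    (K : Type*) [TopologicalSpace K]
    (hnc : ¬ CompactSpace K)
    (hIV : ∀ s : Set K, IsSigmaCompact s → IsCompact (closure s)) :
    ¬ ∃ (J : Type u) (x : J → C₀(K, ℂ)) (c₁ c₂ : ℝ), 0 < c₁ ∧ c₁ ≤ c₂ ∧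
        ∀ t : K, Summable (fun j : J => ‖x j t‖ ^ 2) ∧
          c₁ ≤ ∑' j : J, ‖x j t‖ ^ 2 ∧ (∑' j : J, ‖x j t‖ ^ 2) ≤ c₂ := by
  rintro ⟨J, x, c₁, c₂, hc₁, -, hframe⟩
  refine iUnion_ne_univ_of_countable_setOf_mem hnc hIV (fun j => support (x j))
    (fun j => (map_continuous (x j)).isOpen_support) (fun j => (x j).isSigmaCompact_support)
    (fun t => (hframe t).1.countable_support.mono fun j hj => by simpa using hj) ?_
  refine eq_univ_of_forall fun t => mem_iUnion.mpr ?_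
  by_contra! hzero
  have hsum : ∑' j : J, ‖x j t‖ ^ 2 = 0 := by simp [notMem_support.mp (hzero _)]
  linarith [(hframe t).2.1]

/-- Let `K` be a noncompact locally compact Hausdorff space in which every `σ`-compact
subset has compact closure (class `K_IV`). Then there is no (pointwise) frame in `C₀(K)`:
there are no index set `J`, family `(x j)` in `C₀(K)` and constants `0 < c₁ ≤ c₂` such that
for every `t ∈ K` the family `(‖x j t‖ ^ 2)` is summable with
`c₁ ≤ ∑' j, ‖x j t‖ ^ 2 ≤ c₂`. -/
theorem no_frame_of_KIV
    (K : Type*) [TopologicalSpace K] [LocallyCompactSpace K] [T2Space K]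
    (hnc : ¬ CompactSpace K)
    (hIV : ∀ s : Set K, IsSigmaCompact s → IsCompact (closure s)) :
    ¬ ∃ (J : Type u) (x : J → C₀(K, ℂ)) (c₁ c₂ : ℝ), 0 < c₁ ∧ c₁ ≤ c₂ ∧
        ∀ t : K, Summable (fun j : J => ‖x j t‖ ^ 2) ∧
          c₁ ≤ ∑' j : J, ‖x j t‖ ^ 2 ∧ (∑' j : J, ‖x j t‖ ^ 2) ≤ c₂ :=
  no_frame_of_KIV_general K hnc hIV
end

section
/- Let K be a separable locally compact Hausdorff space that is not σ-compact. Then there is no frame in C₀(K): there exist no index set J, no family (x_j)_{j∈J} of elements of C₀(K), and no constants 0 < c₁ ≤ c₂ forming a pointwise frame, i.e., such that for every t ∈ K the family (|x_j(t)|²)_{j∈J} is summable and c₁ ≤ Σ_{j∈J} |x_j(t)|² ≤ c₂. -/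
open ZeroAtInfty

universe u

lemma compact_level_set {K : Type*} [TopologicalSpace K] [T2Space K]
    (f : C₀(K, ℂ)) {ε : ℝ} (hε : 0 < ε) : IsCompact {t : K | ε ≤ ‖f t‖} := by
  have h2 : (⇑f) ⁻¹' Metric.ball 0 ε ∈ Filter.cocompact K :=
    zero_at_infty f (Metric.ball_mem_nhds 0 hε)
  obtain ⟨s, hs, hsub⟩ := Filter.mem_cocompact.mp h2
  refine hs.of_isClosed_subset (isClosed_le continuous_const (map_continuous f).norm) ?_
  intro t ht
  simp only [Set.mem_setOf_eq] at ht
  by_contra hts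
  have h3 := hsub hts
  simp only [Set.mem_preimage, Metric.mem_ball, dist_zero_right] at h3
  linarith

/-- Let `K` be a separable locally compact Hausdorff space that is not `σ`-compact.
Then there is no (pointwise) frame in `C₀(K)`: there are no index set `J`, family `(x j)`
in `C₀(K)` and constants `0 < c₁ ≤ c₂` such that for every `t ∈ K` the family
`(‖x j t‖ ^ 2)` is summable with `c₁ ≤ ∑' j, ‖x j t‖ ^ 2 ≤ c₂`. -/
theorem no_frame_of_separable_not_sigmaCompact
    (K : Type*) [TopologicalSpace K] [LocallyCompactSpace K] [T2Space K]
    [TopologicalSpace.SeparableSpace K]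
    (hK : ¬ SigmaCompactSpace K) :
    ¬ ∃ (J : Type u) (x : J → C₀(K, ℂ)) (c₁ c₂ : ℝ), 0 < c₁ ∧ c₁ ≤ c₂ ∧
        ∀ t : K, Summable (fun j : J => ‖x j t‖ ^ 2) ∧
          c₁ ≤ ∑' j : J, ‖x j t‖ ^ 2 ∧ (∑' j : J, ‖x j t‖ ^ 2) ≤ c₂ := by
  rintro ⟨J, x, c₁, c₂, hc₁, _, hfr⟩
  obtain ⟨D, hDc, hDd⟩ := TopologicalSpace.exists_countable_dense K
  set S : Set J := ⋃ d ∈ D, Function.support (fun j => ‖x j d‖ ^ 2) with hS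
  have hScount : S.Countable := hDc.biUnion (fun d _ => (hfr d).1.countable_support)
  apply hK
  rw [← isSigmaCompact_univ_iff]
  have hcover : (Set.univ : Set K) =
      ⋃ (p : S × ℕ), {t : K | (1 : ℝ) / (p.2 + 1) ≤ ‖x p.1 t‖} := by
    apply Set.eq_of_subset_of_subset _ (Set.subset_univ _)
    intro t _
    obtain ⟨hsum, hlb, _⟩ := hfr t
    -- find j with x j t ≠ 0
    have : ∃ j, x j t ≠ 0 := by
      by_contra h
      push_neg at h
      have : (∑' j : J, ‖x j t‖ ^ 2) = 0 := by
        simp [h]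
      linarith
    obtain ⟨j, hj⟩ := this
    have hnorm : 0 < ‖x j t‖ := norm_pos_iff.mpr hj
    -- j ∈ S
    have hjS : j ∈ S := by
      have hopen : IsOpen {s : K | x j s ≠ 0} :=
        isOpen_compl_iff.mpr (isClosed_eq (map_continuous (x j)) continuous_const)
      have hne : {s : K | x j s ≠ 0}.Nonempty := ⟨t, hj⟩
      obtain ⟨d, hdD, hd⟩ := hDd.exists_mem_open hopen hne
      exact Set.mem_biUnion hdD (by simp [Function.mem_support]; exact hd)
    obtain ⟨n, hn⟩ := exists_nat_one_div_lt hnorm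
    exact Set.mem_iUnion.mpr ⟨(⟨j, hjS⟩, n), le_of_lt hn⟩
  rw [hcover]
  have : Countable S := hScount.to_subtype
  exact isSigmaCompact_iUnion_of_isCompact _
    (fun p => compact_level_set (x p.1) (by positivity))
end

section
/- Let P be a noncompact locally compact Hausdorff space in which every σ-compact subset has compact closure, and let K = K(P) = (αP × ℕ∞) \ {(∞_P, ∞)}. Then the identity operator of C₀(K) is not C₀(K)-compact: the identity map does not lie in the operator-norm closure of the linear span of the operators θ_{x,y} : z ↦ x·conj(y)·z with x, y ∈ C₀(K). -/
open ZeroAtInfty OnePoint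

/-- `K(P) = (αP × ℕ∞) \ {(∞_P, ∞)}`, where `αP` and `ℕ∞` are the one-point
compactifications of `P` and of `ℕ`, with the subspace topology. -/
abbrev deletedPlank (P : Type*) [TopologicalSpace P] : Type _ :=
  {q : OnePoint P × OnePoint ℕ // q ≠ (∞, ∞)}

/-- The elementary `C₀(K)`-compact operator `θ_{x,y} : z ↦ x · conj y · z`. -/
noncomputable def theta {K : Type*} [TopologicalSpace K] (x y : C₀(K, ℂ)) :
    C₀(K, ℂ) →L[ℂ] C₀(K, ℂ) :=
  ContinuousLinearMap.mul ℂ C₀(K, ℂ) (x * star y)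

open Filter Topology Set

section aux

variable (P : Type*) [TopologicalSpace P] [LocallyCompactSpace P] [T2Space P]

lemma dp_isOpen : IsOpen {q : OnePoint P × OnePoint ℕ | q ≠ (∞, ∞)} :=
  isOpen_compl_singleton

instance : LocallyCompactSpace (deletedPlank P) :=
  (dp_isOpen P).locallyCompactSpace

instance : NoncompactSpace (deletedPlank P) := by
  constructor
  intro h
  have hcompact : IsCompact {q : OnePoint P × OnePoint ℕ | q ≠ (∞, ∞)} := by
    have := h.image (f := (Subtype.val : deletedPlank P → OnePoint P × OnePoint ℕ))
      continuous_subtype_val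
    simpa [Set.image_univ, Subtype.range_val] using this
  have hopen : IsOpen {((∞ : OnePoint P), (∞ : OnePoint ℕ))} := by
    rw [← isClosed_compl_iff]
    have : ({((∞ : OnePoint P), (∞ : OnePoint ℕ))}ᶜ : Set (OnePoint P × OnePoint ℕ)) =
        {q : OnePoint P × OnePoint ℕ | q ≠ (∞, ∞)} := by ext q; simp
    rw [this]
    exact hcompact.isClosed
  have hmem : {((∞ : OnePoint P), (∞ : OnePoint ℕ))} ∈
      𝓝 ((∞ : OnePoint P), (∞ : OnePoint ℕ)) := hopen.mem_nhds rfl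
  have hcont : Continuous (fun y : OnePoint ℕ => ((∞ : OnePoint P), y)) :=
    Continuous.prodMk_right _
  have hpre : (fun y : OnePoint ℕ => ((∞ : OnePoint P), y)) ⁻¹'
      {((∞ : OnePoint P), (∞ : OnePoint ℕ))} ∈ 𝓝 (∞ : OnePoint ℕ) :=
    hcont.continuousAt.preimage_mem_nhds hmem
  have hps : (fun y : OnePoint ℕ => ((∞ : OnePoint P), y)) ⁻¹'
      {((∞ : OnePoint P), (∞ : OnePoint ℕ))} = {(∞ : OnePoint ℕ)} := by
    ext y; simp [Prod.ext_iff]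
  rw [hps] at hpre
  have hnb : NeBot (𝓝[≠] (∞ : OnePoint ℕ)) := inferInstance
  obtain ⟨x, hx1, hx2⟩ := hnb.nonempty_of_mem
    (inter_mem (mem_nhdsWithin_of_mem_nhds hpre) self_mem_nhdsWithin)
  exact hx2 hx1

end aux

section key

variable {K : Type*} [TopologicalSpace K] [T2Space K] [LocallyCompactSpace K]
  [NoncompactSpace K]

omit [T2Space K] [LocallyCompactSpace K] [NoncompactSpace K] in
lemma norm_apply_le (h : C₀(K, ℂ)) (k : K) : ‖h k‖ ≤ ‖h‖ := by
  rw [← ZeroAtInftyContinuousMap.norm_toBCF_eq_norm]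
  exact BoundedContinuousFunction.norm_coe_le_norm h.toBCF k

omit [NoncompactSpace K] in
lemma exists_bump (k : K) : ∃ g : C₀(K, ℂ), g k = 1 ∧ ‖g‖ ≤ 1 := by
  obtain ⟨f, hf1, hf0, hfc, hficc⟩ :=
    exists_continuous_one_zero_of_isCompact (isCompact_singleton (x := k)) isClosed_empty
      (disjoint_empty _)
  refine ⟨⟨⟨fun x => (f x : ℂ), by continuity⟩, ?_⟩, ?_, ?_⟩
  · have : HasCompactSupport (fun x => (f x : ℂ)) :=
      hfc.comp_left (g := (Complex.ofReal : ℝ → ℂ)) Complex.ofReal_zero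
    exact this.is_zero_at_infty
  · show ((f k : ℝ) : ℂ) = 1
    rw [show f k = 1 from hf1 rfl]
    norm_num
  · rw [← ZeroAtInftyContinuousMap.norm_toBCF_eq_norm]
    refine (BoundedContinuousFunction.norm_le zero_le_one).mpr fun x => ?_
    have := hficc x
    show ‖((f x : ℝ) : ℂ)‖ ≤ 1
    simp only [Complex.norm_real, Real.norm_eq_abs]
    rw [abs_of_nonneg this.1]
    exact this.2

lemma key (f : C₀(K, ℂ)) :
    1 ≤ ‖ContinuousLinearMap.id ℂ C₀(K, ℂ) - ContinuousLinearMap.mul ℂ C₀(K, ℂ) f‖ := by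
  refine le_of_forall_pos_le_add fun ε hε => ?_
  have hev : ∀ᶠ k in cocompact K, ‖f k‖ < ε := by
    have := Metric.tendsto_nhds.mp f.zero_at_infty' ε hε
    simpa [dist_zero_right] using this
  obtain ⟨k, hk⟩ := hev.exists
  obtain ⟨g, hgk, hgle⟩ := exists_bump k
  set T := ContinuousLinearMap.id ℂ C₀(K, ℂ) - ContinuousLinearMap.mul ℂ C₀(K, ℂ) f with hT
  have h1 : ‖T g‖ ≤ ‖T‖ := T.unit_le_opNorm g hgle
  have h2 : (1 : ℝ) - ε ≤ ‖T g‖ := by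
    have hTg : T g = g - f * g := by
      simp [hT, ContinuousLinearMap.mul_apply']
    have hval : (T g) k = 1 - f k := by
      rw [hTg]
      simp [hgk]
    calc (1 : ℝ) - ε ≤ 1 - ‖f k‖ := by linarith
    _ = ‖(1 : ℂ)‖ - ‖f k‖ := by simp
    _ ≤ ‖(1 : ℂ) - f k‖ := norm_sub_norm_le _ _
    _ = ‖(T g) k‖ := by rw [hval]
    _ ≤ ‖T g‖ := norm_apply_le _ _
  linarith

end key

set_option maxHeartbeats 1000000 in
/-- Let `P` be a noncompact locally compact Hausdorff space in which every `σ`-compact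
subset has compact closure, and let `K = (αP × ℕ∞) \ {(∞_P, ∞)}`. Then the identity
operator of `C₀(K)` is not `C₀(K)`-compact: it does not lie in the operator-norm closure
of the linear span of the elementary operators `θ_{x,y}`. -/
theorem id_not_A_compact_deletedPlank
    (P : Type*) [TopologicalSpace P] [LocallyCompactSpace P] [T2Space P]
    (hnc : ¬ CompactSpace P)
    (hIV : ∀ s : Set P, IsSigmaCompact s → IsCompact (closure s)) :
    ContinuousLinearMap.id ℂ C₀(deletedPlank P, ℂ) ∉
      closure (↑(Submodule.span ℂ
        (Set.range (fun p : C₀(deletedPlank P, ℂ) × C₀(deletedPlank P, ℂ) =>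
          theta p.1 p.2))) :
        Set (C₀(deletedPlank P, ℂ) →L[ℂ] C₀(deletedPlank P, ℂ))) := by
  intro hmem
  set K := deletedPlank P with hK
  set S : Set (C₀(K, ℂ) →L[ℂ] C₀(K, ℂ)) :=
    (↑(Submodule.span ℂ
      (Set.range (fun p : C₀(K, ℂ) × C₀(K, ℂ) => theta p.1 p.2)))) with hS
  have hmem' : ContinuousLinearMap.id ℂ C₀(K, ℂ) ∈
      @closure _ (@UniformSpace.toTopologicalSpace _ PseudoMetricSpace.toUniformSpace) S := hmem
  set L := ContinuousLinearMap.mul ℂ C₀(K, ℂ) with hL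
  have hspan : (Submodule.span ℂ
      (Set.range (fun p : C₀(K, ℂ) × C₀(K, ℂ) => theta p.1 p.2))) ≤
      LinearMap.range (L : C₀(K, ℂ) →ₗ[ℂ] (C₀(K, ℂ) →L[ℂ] C₀(K, ℂ))) := by
    rw [Submodule.span_le]
    rintro _ ⟨⟨x, y⟩, rfl⟩
    exact ⟨x * star y, rfl⟩
  obtain ⟨T, hTmem, hTdist⟩ := Metric.mem_closure_iff.mp hmem' 1 one_pos
  obtain ⟨f, rfl⟩ := hspan hTmem
  have hkey := key (K := K) f
  have h1 : (1 : ℝ) ≤ dist (ContinuousLinearMap.id ℂ C₀(K, ℂ)) (L f) := by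
    have e : dist (ContinuousLinearMap.id ℂ C₀(K, ℂ)) (L f)
        = ‖ContinuousLinearMap.id ℂ C₀(K, ℂ) - L f‖ := by exact dist_eq_norm (ContinuousLinearMap.id ℂ C₀(K, ℂ)) (L f)
    rw [e]; exact hkey
  exact absurd hTdist (not_lt.mpr h1)
end

section
/- Let P be a noncompact locally compact Hausdorff space in which every σ-compact subset has compact closure, and let K = K(P) = (αP × ℕ∞) \ {(∞_P, ∞)}. Then there is no frame in C₀(K): there exist no index set J, no family (x_j)_{j∈J} of elements of C₀(K), and no constants 0 < c₁ ≤ c₂ forming a pointwise frame, i.e., such that for every t ∈ K the family (|x_j(t)|²)_{j∈J} is summable and c₁ ≤ Σ_{j∈J} |x_j(t)|² ≤ c₂. -/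
open ZeroAtInfty OnePoint

universe u

/-!
The plank contains `P` as the closed row `P × {∞}`, so it suffices to show that on `P` no family
`φ j = |x j|²` of continuous functions vanishing at infinity can have sums `∑ j, φ j p` bounded
between `c₁ > 0` and `c₂`. Every such `φ j` has σ-compact support, hence compact support by the
hypothesis on `P`. Suppose that off every compact set some finite partial sum exceeds `m`. Choosing
points `q k` off the supports of all the indices used before, we get witnesses with pairwise
disjoint finite index sets `G k`. The countable set `{q k}` has compact closure, so the `q k`
cluster at some `p`. Near `p` a finite set `G` of indices carries mass `> c₁ / 2`, and `G` meets
only finitely many `G k`, so some `q k` carries mass `> m + c₁ / 2`. Iterating contradicts the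
upper bound `c₂`.
-/

open Filter Topology Set Function

section SupportOfVanishingAtInfinity

variable {X E : Type*} [TopologicalSpace X] [NormedAddCommGroup E] {f : X → E}

theorem isCompact_setOf_le_norm_of_tendsto_cocompact (hf : Continuous f)
    (h : Tendsto f (cocompact X) (𝓝 0)) {ε : ℝ} (hε : 0 < ε) : IsCompact {x | ε ≤ ‖f x‖} := by
  obtain ⟨t, ht, hsub⟩ := mem_cocompact'.mp (h.norm.eventually (eventually_lt_nhds (by simpa)))
  exact ht.of_isClosed_subset (isClosed_le continuous_const hf.norm)
    fun x (hx : ε ≤ ‖f x‖) => hsub hx.not_gt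

theorem isSigmaCompact_support_of_tendsto_cocompact (hf : Continuous f)
    (h : Tendsto f (cocompact X) (𝓝 0)) : IsSigmaCompact (support f) := by
  have hsupp : support f = ⋃ n : ℕ, {x | 1 / ((n : ℝ) + 1) ≤ ‖f x‖} := by
    ext x
    simp only [mem_support, mem_iUnion, ← norm_pos_iff]
    exact ⟨fun hx => (exists_nat_one_div_lt hx).imp fun _ => le_of_lt,
      fun ⟨n, hn⟩ => (Nat.one_div_pos_of_nat).trans_le hn⟩
  rw [hsupp]
  exact isSigmaCompact_iUnion_of_isCompact _
    fun n => isCompact_setOf_le_norm_of_tendsto_cocompact hf h Nat.one_div_pos_of_nat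

theorem hasCompactSupport_of_tendsto_cocompact
    (hX : ∀ s : Set X, IsSigmaCompact s → IsCompact (closure s)) (hf : Continuous f)
    (h : Tendsto f (cocompact X) (𝓝 0)) : HasCompactSupport f :=
  hX _ (isSigmaCompact_support_of_tendsto_cocompact hf h)

end SupportOfVanishingAtInfinity

theorem finite_setOf_not_disjoint_of_pairwise_disjoint {ι J : Type*} {G : ι → Finset J}
    (hG : Pairwise (Disjoint on G)) (s : Finset J) : {k | ¬ Disjoint (G k) s}.Finite := by
  have hsub : {k | ¬ Disjoint (G k) s} ⊆ ⋃ j ∈ (s : Set J), {k | j ∈ G k} := fun k hk =>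
    let ⟨j, hjG, hjs⟩ := Finset.not_disjoint_iff.mp hk
    mem_biUnion hjs hjG
  refine (s.finite_toSet.biUnion fun j _ => Subsingleton.finite ?_).subset hsub
  intro k₁ h₁ k₂ h₂
  by_contra hne
  exact Finset.disjoint_left.mp (hG hne) h₁ h₂

section ExceedsOffCompacts

variable {X J : Type*} [TopologicalSpace X] {φ : J → X → ℝ}

def ExceedsOffCompacts (φ : J → X → ℝ) (m : ℝ) : Prop :=
  ∀ C : Set X, IsCompact C → ∃ q ∉ C, ∃ G : Finset J, m < ∑ j ∈ G, φ j q

theorem exceedsOffCompacts_of_forall [NoncompactSpace X] {m : ℝ}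
    (h : ∀ p, ∃ G : Finset J, m < ∑ j ∈ G, φ j p) : ExceedsOffCompacts φ m := fun _ hC =>
  let ⟨q, hq⟩ := (ne_univ_iff_exists_notMem _).mp hC.ne_univ
  ⟨q, hq, h q⟩

theorem ExceedsOffCompacts.exists_seq_pairwise_disjoint (hsupp : ∀ j, HasCompactSupport (φ j))
    {m : ℝ} (hm : ExceedsOffCompacts φ m) {C : Set X} (hC : IsCompact C) :
    ∃ (q : ℕ → X) (G : ℕ → Finset J), (∀ k, q k ∉ C) ∧ Pairwise (Disjoint on G) ∧
      ∀ k, m < ∑ j ∈ G k, φ j (q k) := by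
  classical
  have hpick : ∀ A : Finset J, ∃ q, q ∉ C ∧ (∀ j ∈ A, φ j q = 0) ∧
      ∃ G : Finset J, (∀ j ∈ G, φ j q ≠ 0) ∧ m < ∑ j ∈ G, φ j q := by
    intro A
    obtain ⟨q, hq, G, hG⟩ := hm (C ∪ ⋃ j ∈ A, tsupport (φ j))
      (hC.union (A.isCompact_biUnion fun j _ => hsupp j))
    simp only [mem_union, mem_iUnion, not_or, not_exists] at hq
    refine ⟨q, hq.1, fun j hj => image_eq_zero_of_notMem_tsupport (hq.2 j hj),
      G.filter (φ · q ≠ 0), fun j hj => (Finset.mem_filter.mp hj).2, ?_⟩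
    rwa [Finset.sum_filter_ne_zero]
  choose q hqC hqA G hGne hGsum using hpick
  -- `A k` collects the indices used in the first `k` steps.
  let A : ℕ → Finset J := fun k => Nat.rec ∅ (fun _ Ak => Ak ∪ G Ak) k
  have hAmono : Monotone A := monotone_nat_of_le_succ fun _ => Finset.subset_union_left
  refine ⟨fun k => q (A k), fun k => G (A k), fun k => hqC _, ?_, fun k => hGsum _⟩
  refine (pairwise_disjoint_on _).mpr fun i k hik => Finset.disjoint_left.mpr fun j hji hjk => ?_
  have hjA : j ∈ A k := hAmono (Nat.succ_le_of_lt hik) (Finset.subset_union_right hji)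
  exact hGne _ j hjk (hqA _ j hjA)

theorem ExceedsOffCompacts.add (hX : ∀ s : Set X, IsSigmaCompact s → IsCompact (closure s))
    (hcont : ∀ j, Continuous (φ j)) (hsupp : ∀ j, HasCompactSupport (φ j)) {δ m : ℝ}
    (hδ : ∀ p, ∃ G : Finset J, δ < ∑ j ∈ G, φ j p) (hm : ExceedsOffCompacts φ m) :
    ExceedsOffCompacts φ (m + δ) := by
  classical
  intro C hC
  obtain ⟨q, G, hqC, hG, hqG⟩ := hm.exists_seq_pairwise_disjoint hsupp hC
  obtain ⟨p, -, hp⟩ := (hX _ (isSigmaCompact_range (f := q) continuous_of_discreteTopology))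
    |>.exists_mapClusterPt_of_frequently (l := atTop)
      (Frequently.of_forall fun k => subset_closure (mem_range_self k))
  obtain ⟨Gp, hGp⟩ := hδ p
  have hnear : ∀ᶠ y in 𝓝 p, δ < ∑ j ∈ Gp, φ j y :=
    (continuous_finsetSum Gp fun j _ => hcont j).continuousAt.eventually (eventually_gt_nhds hGp)
  have hdisj : ∀ᶠ k in atTop, Disjoint (G k) Gp := by
    simpa [Nat.cofinite_eq_atTop] using
      (finite_setOf_not_disjoint_of_pairwise_disjoint hG Gp).eventually_cofinite_notMem
  obtain ⟨k, hk, hkGp⟩ := ((hp.frequently hnear).and_eventually hdisj).exists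
  refine ⟨q k, hqC k, G k ∪ Gp, ?_⟩
  rw [Finset.sum_union hkGp]
  linarith [hqG k]

theorem exceedsOffCompacts_nat_mul [NoncompactSpace X]
    (hX : ∀ s : Set X, IsSigmaCompact s → IsCompact (closure s))
    (hcont : ∀ j, Continuous (φ j)) (hsupp : ∀ j, HasCompactSupport (φ j)) {δ : ℝ}
    (hδ : ∀ p, ∃ G : Finset J, δ < ∑ j ∈ G, φ j p) (n : ℕ) :
    ExceedsOffCompacts φ ((n + 1) * δ) := by
  induction n with
  | zero => simpa using exceedsOffCompacts_of_forall hδ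
  | succ n ih =>
    convert ih.add hX hcont hsupp hδ using 1
    push_cast
    ring

theorem not_forall_tsum_mem_Icc [NoncompactSpace X]
    (hX : ∀ s : Set X, IsSigmaCompact s → IsCompact (closure s))
    (hcont : ∀ j, Continuous (φ j)) (hsupp : ∀ j, HasCompactSupport (φ j))
    (hnonneg : ∀ j p, 0 ≤ φ j p) {c₁ c₂ : ℝ} (hc₁ : 0 < c₁) :
    ¬ ∀ p, Summable (φ · p) ∧ ∑' j, φ j p ∈ Icc c₁ c₂ := by
  intro h
  have hδ : ∀ p, ∃ G : Finset J, c₁ / 2 < ∑ j ∈ G, φ j p := fun p =>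
    ((h p).1.hasSum.eventually (eventually_gt_nhds (by linarith [(h p).2.1]))).exists
  obtain ⟨n, hn⟩ := exists_nat_gt (c₂ / (c₁ / 2))
  obtain ⟨p, -, G, hG⟩ := exceedsOffCompacts_nat_mul hX hcont hsupp hδ n ∅ isCompact_empty
  have hle : ∑ j ∈ G, φ j p ≤ c₂ :=
    (sum_le_hasSum G (fun j _ => hnonneg j p) (h p).1.hasSum).trans (h p).2.2
  rw [div_lt_iff₀ (half_pos hc₁)] at hn
  nlinarith

end ExceedsOffCompacts

def deletedPlank.topEdge (P : Type*) [TopologicalSpace P] (p : P) : deletedPlank P :=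
  ⟨((p : OnePoint P), ∞), fun h => OnePoint.coe_ne_infty p (congrArg Prod.fst h)⟩

theorem deletedPlank.isClosedEmbedding_topEdge (P : Type*) [TopologicalSpace P] :
    IsClosedEmbedding (deletedPlank.topEdge P) := by
  refine ⟨((isEmbedding_prodMkLeft _).comp isOpenEmbedding_coe.isEmbedding).codRestrict
    {q | q ≠ (∞, ∞)} fun p => (deletedPlank.topEdge P p).2, ?_⟩
  have hrange : range (deletedPlank.topEdge P) = {t | t.1.2 = ∞} := by
    ext ⟨⟨a, b⟩, hab⟩
    induction a using OnePoint.rec with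
    | infty => simpa [deletedPlank.topEdge] using hab
    | coe p => simp [deletedPlank.topEdge, eq_comm]
  rw [hrange]
  exact isClosed_eq (continuous_snd.comp continuous_subtype_val) continuous_const

theorem no_frame_of_deletedPlank_general
    (P : Type*) [TopologicalSpace P]
    (hnc : ¬ CompactSpace P)
    (hIV : ∀ s : Set P, IsSigmaCompact s → IsCompact (closure s)) :
    ¬ ∃ (J : Type u) (x : J → C₀(deletedPlank P, ℂ)) (c₁ c₂ : ℝ), 0 < c₁ ∧ c₁ ≤ c₂ ∧
        ∀ t : deletedPlank P, Summable (fun j : J => ‖x j t‖ ^ 2) ∧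
          c₁ ≤ ∑' j : J, ‖x j t‖ ^ 2 ∧ (∑' j : J, ‖x j t‖ ^ 2) ≤ c₂ := by
  rintro ⟨J, x, c₁, c₂, hc₁, -, hframe⟩
  have : NoncompactSpace P := not_compactSpace_iff.mp hnc
  have hrow := deletedPlank.isClosedEmbedding_topEdge P
  have hcont : ∀ j, Continuous fun p => ‖x j (deletedPlank.topEdge P p)‖ ^ 2 := fun j =>
    (((map_continuous (x j)).comp hrow.continuous).norm).pow 2
  have hvanish : ∀ j, Tendsto (fun p => ‖x j (deletedPlank.topEdge P p)‖ ^ 2) (cocompact P) (𝓝 0) :=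
    fun j => by simpa using (((zero_at_infty (x j)).comp hrow.tendsto_cocompact).norm).pow 2
  exact not_forall_tsum_mem_Icc hIV hcont
    (fun j => hasCompactSupport_of_tendsto_cocompact hIV (hcont j) (hvanish j))
    (fun j p => by positivity) hc₁ fun p => ⟨(hframe _).1, (hframe _).2⟩

/-- Let `P` be a noncompact locally compact Hausdorff space in which every `σ`-compact
subset has compact closure, and let `K = (αP × ℕ∞) \ {(∞_P, ∞)}`. Then there is no
(pointwise) frame in `C₀(K)`: there are no index set `J`, family `(x j)` in `C₀(K)` and
constants `0 < c₁ ≤ c₂` such that for every `t ∈ K` the family `(‖x j t‖ ^ 2)` is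
summable with `c₁ ≤ ∑' j, ‖x j t‖ ^ 2 ≤ c₂`. -/
theorem no_frame_of_deletedPlank
    (P : Type*) [TopologicalSpace P] [LocallyCompactSpace P] [T2Space P]
    (hnc : ¬ CompactSpace P)
    (hIV : ∀ s : Set P, IsSigmaCompact s → IsCompact (closure s)) :
    ¬ ∃ (J : Type u) (x : J → C₀(deletedPlank P, ℂ)) (c₁ c₂ : ℝ), 0 < c₁ ∧ c₁ ≤ c₂ ∧
        ∀ t : deletedPlank P, Summable (fun j : J => ‖x j t‖ ^ 2) ∧
          c₁ ≤ ∑' j : J, ‖x j t‖ ^ 2 ∧ (∑' j : J, ‖x j t‖ ^ 2) ≤ c₂ :=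
  no_frame_of_deletedPlank_general P hnc hIV
end

section
/- Let Λ be an index type and (K_λ)_{λ∈Λ} a family of locally compact Hausdorff spaces. Suppose that for each λ there is a family (u_{λ,i})_{i∈I_λ} in C₀(K_λ) satisfying the reconstruction formula in norm: for every x ∈ C₀(K_λ), the family (u_{λ,i}·conj(u_{λ,i})·x)_{i∈I_λ} is summable in the norm of C₀(K_λ) with sum x. Let K = ⨆_{λ∈Λ} K_λ be the topological disjoint union and let x_{λ,i} ∈ C₀(K) be the extension of u_{λ,i} by zero outside K_λ. Then the combined family (x_{λ,i})_{(λ,i)} satisfies the reconstruction formula in C₀(K): for every x ∈ C₀(K), the family (x_{λ,i}·conj(x_{λ,i})·x)_{(λ,i)} is summable in the norm of C₀(K) with sum x; in particular, it is a normalized standard frame for C₀(K) (bounds c₁ = c₂ = 1). -/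
open ZeroAtInfty

/-!
If `∑ᵢ |fᵢ(t)|² = 1` at every point `t`, the partial sums of `∑ᵢ fᵢ fᵢ* y` are `S_F · y`, where
`S_F = ∑_{i ∈ F} |fᵢ|²` is continuous, increasing in `F`, `[0, 1]`-valued and tends pointwise
to `1`. By Dini's theorem `S_F → 1` uniformly on compact sets, and since `y` vanishes at
infinity this gives `S_F · y → y` in norm. Conversely, on a locally compact Hausdorff space,
evaluating the reconstruction formula at `t` for a function equal to `1` at `t` gives
`∑ᵢ |uᵢ(t)|² = 1`. At a point of the `λ`-th summand of the disjoint union only the extensions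
of the `u λ i` are nonzero, so the combined family again satisfies `∑ |x_p|² = 1` pointwise.
-/

open Filter Set Topology

section UniformConvergence

variable {ι α E : Type*} [TopologicalSpace α] [NormedAddCommGroup E] [NormedSpace ℝ E]

theorem tendstoUniformly_smul_of_tendstoUniformlyOn_isCompact {l : Filter ι} {S : ι → α → ℝ}
    {y : α → E} {M : ℝ} (hS : ∀ i t, S i t ∈ Icc 0 1)
    (hS_one : ∀ C, IsCompact C → TendstoUniformlyOn S (fun _ => 1) l C)
    (hy : Tendsto y (cocompact α) (𝓝 0)) (hyM : ∀ t, ‖y t‖ ≤ M) :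
    TendstoUniformly (fun i t => S i t • y t) y l := by
  rw [Metric.tendstoUniformly_iff]
  intro ε hε
  obtain ⟨C, hC, hyC⟩ := mem_cocompact.mp (hy.eventually (eventually_norm_sub_lt 0 hε))
  filter_upwards [Metric.tendstoUniformlyOn_iff.mp (hS_one C hC) (ε / (|M| + 1)) (by positivity)]
    with i hi t
  have hdist : dist (y t) (S i t • y t) = |1 - S i t| * ‖y t‖ := by
    rw [dist_eq_norm, ← Real.norm_eq_abs, ← norm_smul, sub_smul, one_smul]
  rw [hdist]
  by_cases htC : t ∈ C
  · have h1 : |1 - S i t| < ε / (|M| + 1) := by simpa [Real.dist_eq] using hi t htC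
    calc |1 - S i t| * ‖y t‖ ≤ ε / (|M| + 1) * |M| := by
          gcongr; exact (hyM t).trans (le_abs_self M)
      _ < ε := by
          rw [div_mul_eq_mul_div, div_lt_iff₀ (by positivity)]; nlinarith [abs_nonneg M]
  · have h1 : |1 - S i t| ≤ 1 := by
      rw [abs_le]; constructor <;> linarith [(hS i t).1, (hS i t).2]
    calc |1 - S i t| * ‖y t‖ ≤ 1 * ‖y t‖ := by gcongr
      _ < ε := by simpa using hyC htC

end UniformConvergence

namespace ZeroAtInftyContinuousMap

variable {ι α 𝕜 : Type*} [TopologicalSpace α] [RCLike 𝕜]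

@[simp]
theorem coe_sum {β : Type*} [TopologicalSpace β] [AddCommMonoid β] [ContinuousAdd β]
    (s : Finset ι) (f : ι → C₀(α, β)) : ⇑(∑ i ∈ s, f i) = ∑ i ∈ s, ⇑(f i) :=
  map_sum (⟨⟨(⇑), coe_zero⟩, coe_add⟩ : C₀(α, β) →+ α → β) f s

theorem hasSum_apply {β : Type*} [NormedAddCommGroup β] {f : ι → C₀(α, β)} {g : C₀(α, β)}
    (h : HasSum f g) (t : α) : HasSum (fun i => f i t) (g t) := by
  have := (tendsto_iff_tendstoUniformly.mp h).tendsto_at t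
  simpa [HasSum] using this

theorem hasSum_mul_star_mul_of_hasSum_norm_sq {f : ι → C₀(α, 𝕜)}
    (hf : ∀ t, HasSum (fun i => ‖f i t‖ ^ 2) 1) (y : C₀(α, 𝕜)) :
    HasSum (fun i => f i * star (f i) * y) y := by
  set S : Finset ι → α → ℝ := fun s t => ∑ i ∈ s, ‖f i t‖ ^ 2
  have hS_mem (s : Finset ι) (t : α) : S s t ∈ Icc 0 1 :=
    ⟨by positivity, sum_le_hasSum s (fun i _ => by positivity) (hf t)⟩
  have hS_one (C : Set α) (hC : IsCompact C) : TendstoUniformlyOn S (fun _ => 1) atTop C :=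
    Monotone.tendstoUniformlyOn_of_forall_tendsto hC (fun s => by fun_prop)
      (fun t _ _ _ hst => Finset.sum_le_sum_of_subset_of_nonneg hst fun _ _ _ => by positivity)
      continuousOn_const (fun t _ => hf t)
  have hpartial (s : Finset ι) : ⇑(∑ i ∈ s, f i * star (f i) * y) = fun t => S s t • y t := by
    ext t
    simp [S, coe_sum, Finset.sum_mul, RCLike.mul_conj, RCLike.real_smul_eq_coe_mul]
  rw [HasSum, tendsto_iff_tendstoUniformly]
  simp only [SummationFilter.unconditional_filter, hpartial]
  exact tendstoUniformly_smul_of_tendstoUniformlyOn_isCompact hS_mem hS_one (zero_at_infty y)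
    fun t => norm_toBCF_eq_norm (f := y) ▸ y.toBCF.norm_coe_le_norm t

theorem exists_apply_eq_one [LocallyCompactSpace α] [T2Space α] (t : α) :
    ∃ v : C₀(α, 𝕜), v t = 1 := by
  obtain ⟨g, hg_one, -, hg_supp, -⟩ := exists_continuous_one_zero_of_isCompact
    isCompact_singleton isClosed_empty (disjoint_empty {t})
  refine ⟨⟨(ContinuousMap.mk (algebraMap ℝ 𝕜) (by fun_prop)).comp g, ?_⟩, ?_⟩
  · exact (hg_supp.comp_left (map_zero (algebraMap ℝ 𝕜))).is_zero_at_infty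
  · show algebraMap ℝ 𝕜 (g t) = 1
    simp [hg_one rfl]

theorem hasSum_norm_sq_of_hasSum_mul_star_mul [LocallyCompactSpace α] [T2Space α]
    {f : ι → C₀(α, 𝕜)} (hf : ∀ v, HasSum (fun i => f i * star (f i) * v) v) (t : α) :
    HasSum (fun i => ‖f i t‖ ^ 2) 1 := by
  obtain ⟨v, hv⟩ := exists_apply_eq_one (𝕜 := 𝕜) t
  have := hasSum_apply (hf v) t
  simp only [coe_mul, coe_star, Pi.mul_apply, Pi.star_apply, hv, mul_one, RCLike.star_def,
    RCLike.mul_conj] at this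
  rw [← RCLike.ofReal_one, ← RCLike.hasSum_ofReal 𝕜]
  simpa using this

end ZeroAtInftyContinuousMap

open ZeroAtInftyContinuousMap

/-- Let `(K λ)` be a family of locally compact Hausdorff spaces, and for each `λ` let
`(u λ i)` be a family in `C₀(K λ)` satisfying the reconstruction formula in norm:
for every `v ∈ C₀(K λ)`, the family `(u λ i · conj (u λ i) · v)` is summable in the norm
of `C₀(K λ)` with sum `v`. Let `K = ⨆ λ, K λ` be the topological disjoint union and
`x' λ i ∈ C₀(K)` the extension of `u λ i` by zero. Then the combined family satisfies the
reconstruction formula in `C₀(K)`; in particular it is a normalized standard frame for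
`C₀(K)` (bounds `c₁ = c₂ = 1`). -/
theorem reconstruction_of_sigma
    {Λ : Type*} (K : Λ → Type*)
    [∀ l, TopologicalSpace (K l)] [∀ l, LocallyCompactSpace (K l)] [∀ l, T2Space (K l)]
    {I : Λ → Type*} (u : (l : Λ) → I l → C₀(K l, ℂ))
    (hu : ∀ (l : Λ) (v : C₀(K l, ℂ)),
      Summable (fun i : I l => u l i * star (u l i) * v) ∧
      (∑' i : I l, u l i * star (u l i) * v) = v)
    (x' : (l : Λ) → I l → C₀((Σ l, K l), ℂ))
    (hx' : ∀ (l : Λ) (i : I l) (t : K l), x' l i ⟨l, t⟩ = u l i t)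
    (hx'0 : ∀ (l : Λ) (i : I l) (l' : Λ), l' ≠ l → ∀ t : K l', x' l i ⟨l', t⟩ = 0) :
    ∀ x : C₀((Σ l, K l), ℂ),
      (Summable (fun p : Σ l, I l => x' p.1 p.2 * star (x' p.1 p.2) * x) ∧
        (∑' p : Σ l, I l, x' p.1 p.2 * star (x' p.1 p.2) * x) = x) ∧
      (Summable (fun p : Σ l, I l => star (x' p.1 p.2) * x' p.1 p.2 * (star x * x)) ∧
        (∑' p : Σ l, I l, star (x' p.1 p.2) * x' p.1 p.2 * (star x * x)) = star x * x) := by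
  have hx'_norm_sq : ∀ s : Σ l, K l, HasSum (fun p : Σ l, I l => ‖x' p.1 p.2 s‖ ^ 2) 1 := by
    rintro ⟨l, t⟩
    have hu_sq := hasSum_norm_sq_of_hasSum_mul_star_mul
      (fun v => (hu l v).1.hasSum_iff.mpr (hu l v).2) t
    rw [← (sigma_mk_injective (i := l)).hasSum_iff]
    · simpa [Function.comp_def, hx'] using hu_sq
    · rintro ⟨l', i⟩ hp
      obtain rfl | hl := eq_or_ne l' l
      · exact absurd ⟨i, rfl⟩ hp
      · simp [hx'0 l' i l hl.symm]
  have hrecon := hasSum_mul_star_mul_of_hasSum_norm_sq hx'_norm_sq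
  intro x
  simp_rw [mul_comm (star (x' _ _))]
  exact ⟨⟨(hrecon x).summable, (hrecon x).tsum_eq⟩, (hrecon _).summable, (hrecon _).tsum_eq⟩
end

section
/- Let P₁ be a noncompact locally compact Hausdorff space in which every σ-compact subset has compact closure, let P₂ be any locally compact Hausdorff space, and let K = P₁ ⊔ P₂ be their topological disjoint union. Let F : C₀(K) → C₀(K) be the operator of multiplication by the characteristic function of P₁, i.e., (Fx)(t) = x(t) for t ∈ P₁ and (Fx)(t) = 0 for t ∈ P₂. Then F is a bounded C₀(K)-linear operator which is not C₀(K)-compact: F does not lie in the operator-norm closure of the linear span of the operators θ_{x,y} : z ↦ x·conj(y)·z with x, y ∈ C₀(K). -/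
set_option maxHeartbeats 1000000


open ZeroAtInfty

/-- A disjoint union of locally compact spaces is locally compact. -/
lemma sum_locallyCompactSpace (X Y : Type*) [TopologicalSpace X] [TopologicalSpace Y]
    [LocallyCompactSpace X] [LocallyCompactSpace Y] : LocallyCompactSpace (X ⊕ Y) := by
  constructor
  rintro (a | b) n hn
  · rw [← Topology.IsOpenEmbedding.inl.map_nhds_eq a] at hn ⊢
    rcases LocallyCompactSpace.local_compact_nhds a _ (hn) with
      ⟨s, hs, hsn, hsc⟩
    exact ⟨Sum.inl '' s, Filter.image_mem_map hs,
      Set.image_subset_iff.2 hsn, hsc.image continuous_inl⟩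
  · rw [← Topology.IsOpenEmbedding.inr.map_nhds_eq b] at hn ⊢
    rcases LocallyCompactSpace.local_compact_nhds b _ (hn) with
      ⟨s, hs, hsn, hsc⟩
    exact ⟨Sum.inr '' s, Filter.image_mem_map hs,
      Set.image_subset_iff.2 hsn, hsc.image continuous_inr⟩

/-- Let `P₁` be a noncompact locally compact Hausdorff space in which every `σ`-compact
subset has compact closure, `P₂` any locally compact Hausdorff space, `K = P₁ ⊔ P₂` their
topological disjoint union, and `F : C₀(K) → C₀(K)` the (bounded `C₀(K)`-linear) operator
of multiplication by the characteristic function of `P₁`. Then `F` is not `C₀(K)`-compact: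
it does not lie in the operator-norm closure of the linear span of the elementary
operators `θ_{x,y}`. -/
theorem mul_char_not_A_compact
    (P₁ : Type*) [TopologicalSpace P₁] [LocallyCompactSpace P₁] [T2Space P₁]
    (P₂ : Type*) [TopologicalSpace P₂] [LocallyCompactSpace P₂] [T2Space P₂]
    (hnc : ¬ CompactSpace P₁)
    (hIV : ∀ s : Set P₁, IsSigmaCompact s → IsCompact (closure s))
    (F : C₀(P₁ ⊕ P₂, ℂ) →L[ℂ] C₀(P₁ ⊕ P₂, ℂ))
    (hF : ∀ x : C₀(P₁ ⊕ P₂, ℂ),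
      (∀ t : P₁, F x (Sum.inl t) = x (Sum.inl t)) ∧ ∀ t : P₂, F x (Sum.inr t) = 0) :
    F ∉ closure (↑(Submodule.span ℂ
        (Set.range (fun p : C₀(P₁ ⊕ P₂, ℂ) × C₀(P₁ ⊕ P₂, ℂ) => theta p.1 p.2))) :
      Set (C₀(P₁ ⊕ P₂, ℂ) →L[ℂ] C₀(P₁ ⊕ P₂, ℂ))) := by
  haveI : LocallyCompactSpace (P₁ ⊕ P₂) := sum_locallyCompactSpace P₁ P₂
  intro hmem
  -- every element of the span is a multiplication operator
  have hspan : Submodule.span ℂ (Set.range (fun p : C₀(P₁ ⊕ P₂, ℂ) × C₀(P₁ ⊕ P₂, ℂ) => theta p.1 p.2)) ≤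
      LinearMap.range (ContinuousLinearMap.mul ℂ C₀(P₁ ⊕ P₂, ℂ) : C₀(P₁ ⊕ P₂, ℂ) →ₗ[ℂ] (C₀(P₁ ⊕ P₂, ℂ) →L[ℂ] C₀(P₁ ⊕ P₂, ℂ))) := by
    rw [Submodule.span_le]
    rintro _ ⟨p, rfl⟩
    exact ⟨p.1 * star p.2, rfl⟩
  -- find a multiplication operator within distance 1/2 of F
  rcases mem_closure_iff_nhds.1 hmem (Metric.ball F (1/2))
    (by exact Metric.ball_mem_nhds F (by norm_num)) with ⟨G, hGball, hG⟩
  have hdist : dist F G < 1/2 := by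
    have := Metric.mem_ball.1 hGball; rwa [dist_comm] at this
  rcases hspan hG with ⟨g, rfl⟩
  -- on P₁, g is bounded below by 1/2
  have key : ∀ t : P₁, (1:ℝ)/2 ≤ ‖g (Sum.inl t)‖ := by
    intro t
    obtain ⟨f, hf1, -, hfc, hf01⟩ :=
      exists_continuous_one_zero_of_isCompact (isCompact_singleton (x := (Sum.inl t : P₁ ⊕ P₂)))
        isClosed_empty (Set.disjoint_empty _)
    set x : C₀(P₁ ⊕ P₂, ℂ) := ⟨⟨fun k => (f k : ℂ), Complex.continuous_ofReal.comp f.continuous⟩,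
      (hfc.comp_left (g := (Complex.ofReal : ℝ → ℂ)) (by simp)).is_zero_at_infty⟩ with hx
    have hxval : x (Sum.inl t) = 1 := by
      show ((f (Sum.inl t) : ℝ) : ℂ) = 1
      rw [hf1 (Set.mem_singleton _)]
      simp
    have hxnorm : ‖x‖ ≤ 1 := by
      rw [← ZeroAtInftyContinuousMap.norm_toBCF_eq_norm]
      refine (BoundedContinuousFunction.norm_le (by norm_num)).2 fun k => ?_
      have := hf01 k
      simp only [ZeroAtInftyContinuousMap.toBCF_apply]
      change ‖((f k : ℝ) : ℂ)‖ ≤ 1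
      rw [Complex.norm_real, Real.norm_eq_abs, abs_le]
      exact ⟨by linarith [(hf01 k).1], (hf01 k).2⟩
    have hval : (F x - ContinuousLinearMap.mul ℂ C₀(P₁ ⊕ P₂, ℂ) g x) (Sum.inl t) = 1 - g (Sum.inl t) := by
      rw [ZeroAtInftyContinuousMap.sub_apply, (hF x).1 t, hxval, ContinuousLinearMap.mul_apply',
        ZeroAtInftyContinuousMap.mul_apply, hxval, mul_one]
    have h1 : ‖(1:ℂ) - g (Sum.inl t)‖ ≤ ‖F x - ContinuousLinearMap.mul ℂ C₀(P₁ ⊕ P₂, ℂ) g x‖ := by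
      rw [← hval]
      calc ‖(F x - ContinuousLinearMap.mul ℂ C₀(P₁ ⊕ P₂, ℂ) g x) (Sum.inl t)‖
          = ‖(F x - ContinuousLinearMap.mul ℂ C₀(P₁ ⊕ P₂, ℂ) g x).toBCF (Sum.inl t)‖ := rfl
        _ ≤ ‖(F x - ContinuousLinearMap.mul ℂ C₀(P₁ ⊕ P₂, ℂ) g x).toBCF‖ :=
            BoundedContinuousFunction.norm_coe_le_norm _ _
        _ = ‖F x - ContinuousLinearMap.mul ℂ C₀(P₁ ⊕ P₂, ℂ) g x‖ :=
            ZeroAtInftyContinuousMap.norm_toBCF_eq_norm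
    have h2 : ‖F x - ContinuousLinearMap.mul ℂ C₀(P₁ ⊕ P₂, ℂ) g x‖ ≤ ‖F - ContinuousLinearMap.mul ℂ C₀(P₁ ⊕ P₂, ℂ) g‖ * ‖x‖ := by
      exact (F - ContinuousLinearMap.mul ℂ C₀(P₁ ⊕ P₂, ℂ) g).le_opNorm x
    have h3 : ‖F - ContinuousLinearMap.mul ℂ C₀(P₁ ⊕ P₂, ℂ) g‖ < 1/2 := by
      rw [dist_eq_norm (E := C₀(P₁ ⊕ P₂, ℂ) →L[ℂ] C₀(P₁ ⊕ P₂, ℂ))] at hdist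
      exact hdist
    have h4 : ‖(1:ℂ) - g (Sum.inl t)‖ < 1/2 := by
      calc ‖(1:ℂ) - g (Sum.inl t)‖ ≤ ‖F - ContinuousLinearMap.mul ℂ C₀(P₁ ⊕ P₂, ℂ) g‖ * ‖x‖ := h1.trans h2
        _ ≤ ‖F - ContinuousLinearMap.mul ℂ C₀(P₁ ⊕ P₂, ℂ) g‖ * 1 :=
            mul_le_mul_of_nonneg_left hxnorm (ContinuousLinearMap.opNorm_nonneg _)
        _ < 1/2 := by rw [mul_one]; exact h3
    have : (1:ℝ) = ‖(1:ℂ)‖ := by simp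
    calc (1:ℝ)/2 = 1 - 1/2 := by norm_num
      _ ≤ ‖(1:ℂ)‖ - ‖(1:ℂ) - g (Sum.inl t)‖ := by rw [← this]; linarith
      _ ≤ ‖(1:ℂ) - ((1:ℂ) - g (Sum.inl t))‖ := norm_sub_norm_le _ _
      _ = ‖g (Sum.inl t)‖ := by rw [sub_sub_cancel]
  -- but g vanishes at infinity, so {‖g‖ ≥ 1/2} is contained in a compact set
  have hzero := g.zero_at_infty'
  have hev : ∀ᶠ k in Filter.cocompact (P₁ ⊕ P₂), ‖g k‖ < 1/2 := by
    have := Metric.tendsto_nhds.1 hzero (1/2) (by norm_num)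
    filter_upwards [this] with k hk
    simpa [dist_zero_right] using hk
  rcases Filter.mem_cocompact.1 hev with ⟨S, hSc, hSsub⟩
  have hrange : Set.range (Sum.inl : P₁ → P₁ ⊕ P₂) ⊆ S := by
    rintro _ ⟨t, rfl⟩
    by_contra h
    exact absurd (key t) (not_le.2 (hSsub h))
  have hcr : IsCompact (Set.range (Sum.inl : P₁ → P₁ ⊕ P₂)) :=
    hSc.of_isClosed_subset isClosed_range_inl hrange
  have : CompactSpace P₁ := by
    rw [← isCompact_univ_iff, (Topology.IsEmbedding.inl (Y := P₂)).isCompact_iff]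
    simpa [Set.image_univ] using hcr
  exact hnc this
end

section
/- Let P be a noncompact locally compact Hausdorff space in which every σ-compact subset has compact closure, and let K = K(P) = (αP × ℕ∞) \ {(∞_P, ∞)}. Then: (a) every continuous function f : K → ℂ is bounded (K is pseudocompact), and (b) every continuous bounded function f : K → ℂ has a limit at infinity, i.e., f converges to some c ∈ ℂ along the cocompact filter of K (equivalently, the one-point compactification of K coincides with its Stone–Čech compactification). -/
open Topology ZeroAtInfty OnePoint Filter BoundedContinuousFunction

namespace DeletedPlankAux

variable {P : Type*} [TopologicalSpace P]

/-- A point of the deleted plank with finite second coordinate. -/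
def mk (p : OnePoint P) (n : ℕ) : deletedPlank P :=
  ⟨(p, (n : OnePoint ℕ)), by simp [Prod.ext_iff, OnePoint.coe_ne_infty]⟩

/-- A point of the deleted plank with second coordinate `∞`. -/
def mki (p : P) : deletedPlank P :=
  ⟨((p : OnePoint P), ∞), by simp [Prod.ext_iff, OnePoint.coe_ne_infty]⟩

theorem continuous_mk (n : ℕ) : Continuous fun p : OnePoint P => (mk p n) :=
  (continuous_id.prodMk continuous_const).subtype_mk _

theorem continuous_snd_slice (p : P) :
    Continuous fun m : OnePoint ℕ =>
      (⟨((p : OnePoint P), m), by simp [Prod.ext_iff, OnePoint.coe_ne_infty]⟩ :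
        deletedPlank P) :=
  (continuous_const.prodMk continuous_id).subtype_mk _

variable [LocallyCompactSpace P] [T2Space P]

theorem tendsto_slice_fst (f : C(deletedPlank P, ℂ)) (n : ℕ) :
    Tendsto (fun p : P => f (mk (p : OnePoint P) n)) (cocompact P) (𝓝 (f (mk ∞ n))) := by
  have h1 : Tendsto ((↑) : P → OnePoint P) (cocompact P) (𝓝 (∞ : OnePoint P)) := by
    rw [← Filter.coclosedCompact_eq_cocompact]
    exact OnePoint.tendsto_coe_infty
  exact ((f.continuous.comp (continuous_mk n)).tendsto ∞).comp h1

theorem tendsto_slice_snd (f : C(deletedPlank P, ℂ)) (p : P) :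
    Tendsto (fun k : ℕ => f (mk (p : OnePoint P) k)) atTop (𝓝 (f (mki p))) := by
  have h1 : Tendsto ((↑) : ℕ → OnePoint ℕ) atTop (𝓝 (∞ : OnePoint ℕ)) := by
    rw [← cocompact_eq_atTop, ← Filter.coclosedCompact_eq_cocompact]
    exact OnePoint.tendsto_coe_infty
  exact ((f.continuous.comp (continuous_snd_slice p)).tendsto ∞).comp h1

theorem step1 (hIV : ∀ s : Set P, IsSigmaCompact s → IsCompact (closure s))
    (f : C(deletedPlank P, ℂ)) {ε : ℝ} (hε : 0 < ε) :
    ∃ C : Set P, IsCompact C ∧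
      ∀ p : P, p ∉ C → ∀ n : ℕ, dist (f (mk (p : OnePoint P) n)) (f (mk ∞ n)) ≤ ε := by
  have h1 : ∀ n : ℕ, ∃ Cn : Set P, IsCompact Cn ∧
      ∀ p : P, p ∉ Cn → dist (f (mk (p : OnePoint P) n)) (f (mk ∞ n)) ≤ ε := by
    intro n
    have h2 := (tendsto_slice_fst f n).eventually_mem
      (Metric.closedBall_mem_nhds (f (mk ∞ n)) hε)
    rw [hasBasis_cocompact.eventually_iff] at h2
    obtain ⟨C, hC, hC'⟩ := h2
    exact ⟨C, hC, fun p hp => hC' hp⟩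
  choose Cn hCn hCn' using h1
  refine ⟨closure (⋃ n, Cn n), hIV _ ⟨Cn, hCn, rfl⟩, fun p hp n => hCn' n p fun h => ?_⟩
  exact hp (subset_closure (Set.mem_iUnion.2 ⟨n, h⟩))

/-- The main lemma: any continuous function on the deleted plank has a limit at
infinity along the cocompact filter. -/
theorem key (hnc : ¬ CompactSpace P)
    (hIV : ∀ s : Set P, IsSigmaCompact s → IsCompact (closure s))
    (f : C(deletedPlank P, ℂ)) :
    ∃ c : ℂ, Tendsto f (Filter.cocompact (deletedPlank P)) (𝓝 c) := by
  have hnc' : NoncompactSpace P := not_compactSpace_iff.mp hnc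
  set a : ℕ → ℂ := fun n => f (mk ∞ n) with ha
  -- the sequence `a` is Cauchy
  have hcauchy : CauchySeq a := by
    rw [Metric.cauchySeq_iff]
    intro ε hε
    obtain ⟨C, hC, hC'⟩ := step1 hIV f (show (0:ℝ) < ε / 4 by linarith)
    obtain ⟨p, hp⟩ := Set.ne_univ_iff_exists_notMem C |>.mp hC.ne_univ
    have hb : CauchySeq fun k : ℕ => f (mk (p : OnePoint P) k) :=
      (tendsto_slice_snd f p).cauchySeq
    rw [Metric.cauchySeq_iff] at hb
    obtain ⟨N, hN⟩ := hb (ε / 4) (by linarith)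
    refine ⟨N, fun m hm n hn => ?_⟩
    calc dist (a m) (a n)
        ≤ dist (a m) (f (mk (p : OnePoint P) m)) +
          dist (f (mk (p : OnePoint P) m)) (f (mk (p : OnePoint P) n)) +
          dist (f (mk (p : OnePoint P) n)) (a n) := dist_triangle4 _ _ _ _
      _ < ε / 4 + ε / 4 + ε / 4 := by
          have h1 := hC' p hp m
          have h2 := hC' p hp n
          rw [dist_comm] at h1
          have h3 := hN m hm n hn
          -- h1 : dist (a m) (f (mk p m)) ≤ ε/4 after comm
          have h1' : dist (a m) (f (mk (p : OnePoint P) m)) ≤ ε / 4 := h1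
          have h2' : dist (f (mk (p : OnePoint P) n)) (a n) ≤ ε / 4 := h2
          linarith
      _ < ε := by linarith
  obtain ⟨c, hac⟩ := cauchySeq_tendsto_of_complete hcauchy
  refine ⟨c, ?_⟩
  rw [Metric.tendsto_nhds]
  intro ε hε
  rw [hasBasis_cocompact.eventually_iff]
  obtain ⟨C, hC, hC'⟩ := step1 hIV f (show (0:ℝ) < ε / 4 by linarith)
  obtain ⟨N, hN⟩ := (Metric.tendsto_atTop.mp hac) (ε / 4) (by linarith)
  -- the compact set in the plank
  set L' : Set (OnePoint P × OnePoint ℕ) :=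
    (((↑) : P → OnePoint P) '' C) ×ˢ Set.univ ∪
      Set.univ ×ˢ (((↑) : ℕ → OnePoint ℕ) '' Set.Iic N) with hL'
  have hL'c : IsCompact L' :=
    ((hC.image OnePoint.continuous_coe).prod isCompact_univ).union
      (isCompact_univ.prod (((Set.finite_Iic N).image _).isCompact))
  have hL'sub : L' ⊆ Set.range (Subtype.val : deletedPlank P → _) := by
    rintro ⟨x, y⟩ hq
    rw [Subtype.range_coe_subtype, Set.mem_setOf_eq]
    intro h
    rw [Prod.mk.injEq] at h
    rcases hq with ⟨⟨p, -, hp⟩, -⟩ | ⟨-, ⟨k, -, hk⟩⟩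
    · exact OnePoint.coe_ne_infty p (hp.trans h.1)
    · exact OnePoint.coe_ne_infty k (hk.trans h.2)
  refine ⟨Subtype.val ⁻¹' L',
    (Topology.IsInducing.subtypeVal.isCompact_preimage_iff hL'sub).mpr hL'c, ?_⟩
  rintro ⟨⟨p', m⟩, hq⟩ hqL
  simp only [Set.mem_compl_iff, Set.mem_preimage, hL', Set.mem_union, Set.mem_prod,
    Set.mem_univ, and_true, true_and, not_or] at hqL
  obtain ⟨hp', hm⟩ := hqL
  induction m using OnePoint.rec with
  | infty =>
    -- p' must be a coe point
    induction p' using OnePoint.rec with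
    | infty => exact absurd rfl hq
    | coe p =>
      have hpC : p ∉ C := fun h => hp' ⟨p, h, rfl⟩
      have hq' : (⟨((p : OnePoint P), (∞ : OnePoint ℕ)), hq⟩ : deletedPlank P) = mki p := rfl
      rw [hq']
      have hdist : Tendsto (fun k : ℕ => dist (f (mk (p : OnePoint P) k)) c) atTop
          (𝓝 (dist (f (mki p)) c)) := (tendsto_slice_snd f p).dist tendsto_const_nhds
      have hev : ∀ᶠ k : ℕ in atTop, dist (f (mk (p : OnePoint P) k)) c ≤ ε / 2 := by
        filter_upwards [eventually_ge_atTop N] with k hk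
        calc dist (f (mk (p : OnePoint P) k)) c
            ≤ dist (f (mk (p : OnePoint P) k)) (a k) + dist (a k) c := dist_triangle _ _ _
          _ ≤ ε / 4 + ε / 4 := add_le_add (hC' p hpC k) (le_of_lt (hN k hk))
          _ = ε / 2 := by ring
      have := le_of_tendsto hdist hev
      linarith
  | coe k =>
    have hkN : N ≤ k := by
      by_contra h
      exact hm ⟨k, Set.mem_Iic.mpr (le_of_lt (lt_of_not_ge h)), rfl⟩
    induction p' using OnePoint.rec with
    | infty =>
      have hq' : (⟨((∞ : OnePoint P), ((k : ℕ) : OnePoint ℕ)), hq⟩ : deletedPlank P)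
          = mk ∞ k := rfl
      rw [hq']
      calc dist (f (mk (∞ : OnePoint P) k)) c = dist (a k) c := rfl
        _ < ε / 4 := hN k hkN
        _ < ε := by linarith
    | coe p =>
      have hpC : p ∉ C := fun h => hp' ⟨p, h, rfl⟩
      have hq' : (⟨((p : OnePoint P), ((k : ℕ) : OnePoint ℕ)), hq⟩ : deletedPlank P)
          = mk (p : OnePoint P) k := rfl
      rw [hq']
      calc dist (f (mk (p : OnePoint P) k)) c
          ≤ dist (f (mk (p : OnePoint P) k)) (a k) + dist (a k) c := dist_triangle _ _ _
        _ < ε / 4 + ε / 4 := add_lt_add_of_le_of_lt (hC' p hpC k) (hN k hkN)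
        _ < ε := by linarith

end DeletedPlankAux

/-- Let `P` be a noncompact locally compact Hausdorff space in which every `σ`-compact
subset has compact closure, and let `K = (αP × ℕ∞) \ {(∞_P, ∞)}`. Then:
(a) every continuous function `f : K → ℂ` is bounded (`K` is pseudocompact), and
(b) every bounded continuous function `f : K → ℂ` has a limit at infinity, i.e. converges
to some `c ∈ ℂ` along the cocompact filter of `K`. -/
theorem deletedPlank_pseudocompact_and_onePoint_eq_stoneCech
    (P : Type*) [TopologicalSpace P] [LocallyCompactSpace P] [T2Space P]
    (hnc : ¬ CompactSpace P)
    (hIV : ∀ s : Set P, IsSigmaCompact s → IsCompact (closure s)) :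
    (∀ f : C(deletedPlank P, ℂ), ∃ M : ℝ, ∀ t : deletedPlank P, ‖f t‖ ≤ M) ∧
      (∀ f : deletedPlank P →ᵇ ℂ, ∃ c : ℂ,
        Tendsto f (Filter.cocompact (deletedPlank P)) (nhds c)) := by
  constructor
  · intro f
    obtain ⟨c, hc⟩ := DeletedPlankAux.key hnc hIV f
    have h1 := hc.eventually_mem (Metric.closedBall_mem_nhds c one_pos)
    rw [hasBasis_cocompact.eventually_iff] at h1
    obtain ⟨L, hL, hL'⟩ := h1
    obtain ⟨M₀, hM₀⟩ := hL.exists_bound_of_continuousOn f.continuous.continuousOn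
    refine ⟨max M₀ (‖c‖ + 1), fun t => ?_⟩
    by_cases ht : t ∈ L
    · exact le_max_of_le_left (hM₀ t ht)
    · have h2 : dist (f t) c ≤ 1 := hL' ht
      have h3 : ‖f t‖ - ‖c‖ ≤ ‖f t - c‖ := norm_sub_norm_le _ _
      rw [dist_eq_norm] at h2
      refine le_max_of_le_right ?_
      linarith
  · intro f
    exact DeletedPlankAux.key hnc hIV f.toContinuousMap
end

section
/- Let P be a noncompact locally compact Hausdorff space in which every σ-compact subset has compact closure, and let K = K(P) = (αP × ℕ∞) \ {(∞_P, ∞)}. Let (x_i)_{i∈ℕ} be a sequence in C_b(K) with ‖x_i‖ ≤ 1 for all i, and suppose that for every x ∈ C₀(K) the family of functions (|x_i|²·|x|²)_{i∈ℕ} is summable in the norm of C₀(K) with Σ_{i∈ℕ} |x_i(t)|²·|x(t)|² ≤ |x(t)|² for all t ∈ K (i.e., (x_i) is (C_b(K), C₀(K))-admissible). Then the same conditions hold for every x ∈ C_b(K): the family (|x_i|²·|x|²)_{i∈ℕ} is summable in the norm of C_b(K) (uniform convergence on K) and Σ_{i∈ℕ} |x_i(t)|²·|x(t)|² ≤ |x(t)|²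 for all t ∈ K; that is, (x_i) is (C_b(K), C_b(K))-admissible. -/
open ZeroAtInfty OnePoint BoundedContinuousFunction

/-!
The tails `∑_{i ∈ t} |X i|²` are uniformly small on every compact subset of `K(P)`: test
admissibility against a function of `C₀(K(P))` equal to `1` there. The plank is built so
that this forces them to be uniformly small on all of `K(P)`. Indeed, a point `(∞_P, m)` of
an open set `U` drags along `(p, m)` for all `p` off a compact subset of `P`; so countably
many nonempty open sets `U n` are all met by `(D ∪ {q}) × ℕ∞`, where `D` is the (compact)
closure of the σ-compact set of points of `P` they involve and `q ∉ D` exists because `P` is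
not compact. Hence `∑ |X i|²` converges in `C_b(K(P))`, and multiplying by `|x|²` keeps it
convergent for every `x ∈ C_b(K(P))`.
-/

namespace deletedPlank

variable {P : Type*} [TopologicalSpace P]

def mk (p : P) (n : OnePoint ℕ) : deletedPlank P :=
  ⟨(p, n), fun h => coe_ne_infty p (congrArg Prod.fst h)⟩

theorem continuous_mk : Continuous (Function.uncurry (mk (P := P))) :=
  ((OnePoint.continuous_coe.comp continuous_fst).prodMk continuous_snd).subtype_mk _

instance [LocallyCompactSpace P] [T2Space P] : LocallyCompactSpace (deletedPlank P) :=
  (isOpen_ne (x := ((∞, ∞) : OnePoint P × OnePoint ℕ))).locallyCompactSpace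

theorem exists_isCompact_forall_notMem {U : Set (deletedPlank P)} (hU : IsOpen U)
    (hne : U.Nonempty) :
    ∃ C : Set P, IsCompact C ∧ ∀ q ∉ C, ∃ p ∈ insert q C, ∃ n, mk p n ∈ U := by
  obtain ⟨⟨⟨a, n⟩, ha⟩, hxU⟩ := hne
  induction a using OnePoint.rec with
  | infty =>
    obtain ⟨m, rfl⟩ : ∃ m : ℕ, (m : OnePoint ℕ) = n :=
      ne_infty_iff_exists.1 fun hn => ha (by rw [hn])
    have hcol : Continuous fun r : OnePoint P =>
        (⟨(r, (m : OnePoint ℕ)), fun h => coe_ne_infty m (congrArg Prod.snd h)⟩ :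
          deletedPlank P) :=
      (continuous_id.prodMk continuous_const).subtype_mk _
    have hev : ∀ᶠ p in Filter.coclosedCompact P, mk p m ∈ U :=
      tendsto_coe_infty.eventually ((hcol.tendsto ∞).eventually (hU.mem_nhds hxU))
    obtain ⟨C, ⟨-, hC⟩, hCU⟩ := Filter.hasBasis_coclosedCompact.mem_iff.1 hev
    exact ⟨C, hC, fun q hq => ⟨q, Set.mem_insert q C, m, hCU hq⟩⟩
  | coe p =>
    exact ⟨{p}, isCompact_singleton, fun q _ => ⟨p, by simp, n, hxU⟩⟩

theorem exists_isCompact_inter_nonempty (hnc : ¬ CompactSpace P)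
    (hsigma : ∀ s : Set P, IsSigmaCompact s → IsCompact (closure s))
    (U : ℕ → Set (deletedPlank P)) (hU : ∀ n, IsOpen (U n)) (hne : ∀ n, (U n).Nonempty) :
    ∃ L, IsCompact L ∧ ∀ n, (L ∩ U n).Nonempty := by
  choose C hC hCU using fun n => exists_isCompact_forall_notMem (hU n) (hne n)
  set D := closure (⋃ n, C n)
  have hD : IsCompact D := hsigma _ ⟨C, hC, rfl⟩
  obtain ⟨q, hq⟩ : ∃ q, q ∉ D := by
    by_contra! h
    exact hnc ⟨by simpa [Set.eq_univ_of_forall h] using hD⟩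
  refine ⟨Function.uncurry mk '' (insert q D ×ˢ Set.univ),
    ((hD.insert q).prod isCompact_univ).image continuous_mk, fun n => ?_⟩
  have hCD : C n ⊆ D := (Set.subset_iUnion C n).trans subset_closure
  obtain ⟨p, hp, m, hpm⟩ := hCU n q fun hqC => hq (hCD hqC)
  exact ⟨mk p m, ⟨(p, m), ⟨Set.insert_subset_insert hCD hp, trivial⟩, rfl⟩, hpm⟩

end deletedPlank

theorem ZeroAtInftyContinuousMap.exists_eq_one_on_isCompact {X : Type*} [TopologicalSpace X]
    [LocallyCompactSpace X] [RegularSpace X] {L : Set X} (hL : IsCompact L) :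
    ∃ w : C₀(X, ℂ), ∀ x ∈ L, w x = 1 := by
  obtain ⟨f, hf1, -, hfc, -⟩ :=
    exists_continuous_one_zero_of_isCompact hL isClosed_empty (Set.disjoint_empty L)
  refine ⟨⟨⟨fun x => (f x : ℂ), by fun_prop⟩,
    (hfc.comp_left Complex.ofReal_zero).is_zero_at_infty⟩, fun x hx => ?_⟩
  simp [hf1 hx]

namespace BoundedContinuousFunction

variable {T : Type*} [TopologicalSpace T]

theorem vanishing_norm_sum_apply_of_summable_mul {ι R : Type*} [NormedRing R]
    {f : ι → T →ᵇ R} {g : T →ᵇ R} {L : Set T} (hg : ∀ x ∈ L, g x = 1)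
    (hfg : Summable fun i => f i * g) {ε : ℝ} (hε : 0 < ε) :
    ∃ s : Finset ι, ∀ t, Disjoint t s → ∀ x ∈ L, ‖∑ i ∈ t, f i x‖ < ε := by
  obtain ⟨s, hs⟩ := hfg.vanishing (Metric.ball_mem_nhds 0 hε)
  refine ⟨s, fun t ht x hx => ?_⟩
  calc ‖∑ i ∈ t, f i x‖ = ‖(∑ i ∈ t, f i * g) x‖ := by simp [hg x hx]
    _ ≤ ‖∑ i ∈ t, f i * g‖ := norm_coe_le_norm _ x
    _ < ε := mem_ball_zero_iff.1 (hs t ht)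

theorem summable_of_vanishing_norm_sum_apply_on_isCompact {E : Type*} [NormedAddCommGroup E]
    [CompleteSpace E]
    (hT : ∀ U : ℕ → Set T, (∀ n, IsOpen (U n)) → (∀ n, (U n).Nonempty) →
      ∃ L, IsCompact L ∧ ∀ n, (L ∩ U n).Nonempty)
    {f : ℕ → T →ᵇ E}
    (hf : ∀ L, IsCompact L → ∀ ε > 0, ∃ s : Finset ℕ, ∀ t, Disjoint t s →
      ∀ x ∈ L, ‖∑ i ∈ t, f i x‖ < ε) :
    Summable f := by
  refine summable_iff_vanishing_norm.2 fun ε hε => ?_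
  by_contra! h
  choose t hts htε using fun n => h (Finset.range n)
  have hne : ∀ n, ∃ x, ε / 2 < ‖∑ i ∈ t n, f i x‖ := by
    intro n
    by_contra! hle
    have : ‖∑ i ∈ t n, f i‖ ≤ ε / 2 :=
      (norm_le (by positivity)).2 fun x => by simpa using hle x
    linarith [htε n]
  obtain ⟨L, hL, hLU⟩ := hT (fun n => {x | ε / 2 < ‖∑ i ∈ t n, f i x‖})
    (fun n => isOpen_lt continuous_const (by fun_prop)) hne
  obtain ⟨s, hs⟩ := hf L hL (ε / 2) (by positivity)
  obtain ⟨n, hsn⟩ := Finset.exists_nat_subset_range s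
  obtain ⟨x, hxL, hxU⟩ := hLU n
  exact lt_asymm (hs (t n) ((hts n).mono_right hsn) x hxL) hxU

end BoundedContinuousFunction

theorem admissible_C0_iff_Cb_general
    (P : Type*) [TopologicalSpace P] [LocallyCompactSpace P] [T2Space P]
    (hnc : ¬ CompactSpace P)
    (hIV : ∀ s : Set P, IsSigmaCompact s → IsCompact (closure s))
    (X : ℕ → (deletedPlank P →ᵇ ℂ))
    (hadm : ∀ v : C₀(deletedPlank P, ℂ),
      Summable (fun i : ℕ => star (X i) * X i * (star v.toBCF * v.toBCF)) ∧
      ∀ t : deletedPlank P, (∑' i : ℕ, ‖X i t‖ ^ 2 * ‖v t‖ ^ 2) ≤ ‖v t‖ ^ 2) :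
    ∀ v : deletedPlank P →ᵇ ℂ,
      Summable (fun i : ℕ => star (X i) * X i * (star v * v)) ∧
      ∀ t : deletedPlank P, (∑' i : ℕ, ‖X i t‖ ^ 2 * ‖v t‖ ^ 2) ≤ ‖v t‖ ^ 2 := by
  have hsum : Summable fun i => star (X i) * X i := by
    refine summable_of_vanishing_norm_sum_apply_on_isCompact
      (deletedPlank.exists_isCompact_inter_nonempty hnc hIV) fun L hL ε hε => ?_
    obtain ⟨w, hw⟩ := ZeroAtInftyContinuousMap.exists_eq_one_on_isCompact hL
    exact vanishing_norm_sum_apply_of_summable_mul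
      (fun x hx => by simp [hw x hx]) (hadm w).1 hε
  have hle_one : ∀ t, ∑' i, ‖X i t‖ ^ 2 ≤ 1 := fun t => by
    obtain ⟨w, hw⟩ :=
      ZeroAtInftyContinuousMap.exists_eq_one_on_isCompact (isCompact_singleton (x := t))
    simpa [hw t rfl] using (hadm w).2 t
  intro v
  refine ⟨hsum.mul_right _, fun t => ?_⟩
  rw [tsum_mul_right]
  exact mul_le_of_le_one_left (by positivity) (hle_one t)

/-- Let `P` be a noncompact locally compact Hausdorff space in which every `σ`-compact
subset has compact closure, and `K = (αP × ℕ∞) \ {(∞_P, ∞)}`. If a sequence `(X i)` in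
`C_b(K)` with `‖X i‖ ≤ 1` is `(C_b(K), C₀(K))`-admissible, i.e. for every `x ∈ C₀(K)` the
family of functions `(|X i|² · |x|²)` is summable in the norm of `C₀(K)` with
`∑' i, ‖X i t‖² · ‖x t‖² ≤ ‖x t‖²` for all `t`, then the same holds for every
`x ∈ C_b(K)`: the sequence is `(C_b(K), C_b(K))`-admissible. -/
theorem admissible_C0_iff_Cb
    (P : Type*) [TopologicalSpace P] [LocallyCompactSpace P] [T2Space P]
    (hnc : ¬ CompactSpace P)
    (hIV : ∀ s : Set P, IsSigmaCompact s → IsCompact (closure s))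
    (X : ℕ → (deletedPlank P →ᵇ ℂ))
    (hnorm : ∀ i : ℕ, ‖X i‖ ≤ 1)
    (hadm : ∀ v : C₀(deletedPlank P, ℂ),
      Summable (fun i : ℕ => star (X i) * X i * (star v.toBCF * v.toBCF)) ∧
      ∀ t : deletedPlank P, (∑' i : ℕ, ‖X i t‖ ^ 2 * ‖v t‖ ^ 2) ≤ ‖v t‖ ^ 2) :
    ∀ v : deletedPlank P →ᵇ ℂ,
      Summable (fun i : ℕ => star (X i) * X i * (star v * v)) ∧
      ∀ t : deletedPlank P, (∑' i : ℕ, ‖X i t‖ ^ 2 * ‖v t‖ ^ 2) ≤ ‖v t‖ ^ 2 :=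
  admissible_C0_iff_Cb_general P hnc hIV X hadm
end

section
/- Let K be a locally compact Hausdorff space. The following are equivalent: (i) every σ-compact subset of K has compact closure in K; (ii) for every continuous function f : K → ℂ vanishing at infinity (f tends to 0 along the cocompact filter) there is a compact set K' ⊆ K such that f(t) = 0 for all t ∉ K'; (iii) for every continuous function f : K → ℂ that converges to some c ∈ ℂ along the cocompact filter there is a compact set K' ⊆ K such that f(t) = c for all t ∉ K'. -/
/-!
A function vanishing at infinity has σ-compact support, the union of the compact sets
`{t | 1/(n+1) ≤ ‖f t‖}`; so (i) puts it in the compact set `tsupport f`. Conversely, if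
`s = ⋃ₙ Cₙ` with `Cₙ` compact, pick Urysohn functions `gₙ` with compact support, equal to `1`
on `Cₙ`, with values in `[0, 1]`; then `∑ₙ 2⁻ⁿ gₙ` vanishes at infinity and is positive on `s`,
so by (ii) `s` lies in a compact set. Subtracting the constant `c` turns (iii) into (ii).
-/

open Filter Set Topology

section
variable {X : Type*} [TopologicalSpace X]

theorem isCompact_le_norm_of_tendsto_cocompact_zero {E : Type*} [NormedAddGroup E] {f : X → E}
    (hf : Continuous f) (h0 : Tendsto f (cocompact X) (𝓝 0)) {r : ℝ} (hr : 0 < r) :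
    IsCompact {t | r ≤ ‖f t‖} := by
  obtain ⟨C, hC, hCf⟩ := mem_cocompact.1 (h0 (Metric.ball_mem_nhds 0 hr))
  refine hC.of_isClosed_subset (isClosed_le continuous_const hf.norm) fun t ht => ?_
  by_contra htC
  exact lt_irrefl r (ht.trans_lt (by simpa using hCf htC))

theorem isSigmaCompact_support_of_tendsto_cocompact_zero {E : Type*} [NormedAddGroup E]
    {f : X → E} (hf : Continuous f) (h0 : Tendsto f (cocompact X) (𝓝 0)) :
    IsSigmaCompact (Function.support f) := by
  refine ⟨fun n : ℕ => {t | 1 / (n + 1 : ℝ) ≤ ‖f t‖},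
    fun n => isCompact_le_norm_of_tendsto_cocompact_zero hf h0 Nat.one_div_pos_of_nat, ?_⟩
  ext t
  simp only [mem_iUnion, mem_ofPred_eq, Function.mem_support]
  refine ⟨fun ⟨n, hn⟩ ht => ?_, fun ht => ?_⟩
  · rw [ht, norm_zero] at hn
    exact Nat.one_div_pos_of_nat.not_ge hn
  · exact (exists_nat_one_div_lt (norm_pos_iff.2 ht)).imp fun _ => le_of_lt

theorem exists_tendsto_cocompact_zero_pos_on_of_isSigmaCompact [RegularSpace X]
    [LocallyCompactSpace X] {s : Set X} (hs : IsSigmaCompact s) :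
    ∃ f : C(X, ℝ), Tendsto f (cocompact X) (𝓝 0) ∧ ∀ t ∈ s, 0 < f t := by
  obtain ⟨c, hc, rfl⟩ := hs
  choose g hg_one _ hg_supp hg_mem using fun n =>
    exists_continuous_one_zero_of_isCompact (hc n) isClosed_empty (disjoint_empty _)
  have hbound : ∀ n t, ‖(1 / 2 : ℝ) ^ n * g n t‖ ≤ (1 / 2) ^ n := fun n t => by
    rw [Real.norm_of_nonneg (mul_nonneg (by positivity) (hg_mem n t).1)]
    exact mul_le_of_le_one_right (by positivity) (hg_mem n t).2
  refine ⟨⟨fun t => ∑' n, (1 / 2 : ℝ) ^ n * g n t, continuous_tsum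
    (fun n => continuous_const.mul (g n).continuous) summable_geometric_two hbound⟩, ?_, ?_⟩
  · have hterm (n : ℕ) : Tendsto (fun t => (1 / 2 : ℝ) ^ n * g n t) (cocompact X) (𝓝 0) :=
      (hg_supp n).mul_left (f := fun _ => (1 / 2 : ℝ) ^ n) |>.is_zero_at_infty
    simpa using tendsto_tsum_of_dominated_convergence summable_geometric_two hterm
      (.of_forall fun t n => hbound n t)
  · intro t ht
    obtain ⟨n, hn⟩ := mem_iUnion.1 ht
    refine (summable_geometric_two.of_norm_bounded (hbound · t)).tsum_pos
      (fun m => mul_nonneg (by positivity) (hg_mem m t).1) n ?_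
    simp [hg_one n hn]
end

/-- For a locally compact Hausdorff space `K` the following are equivalent:
(i) every `σ`-compact subset of `K` has compact closure;
(ii) every continuous `f : K → ℂ` vanishing at infinity vanishes outside some compact set;
(iii) every continuous `f : K → ℂ` having a limit `c` at infinity equals `c` outside some
compact set. -/
theorem sigmaCompact_precompact_tfae
    (K : Type*) [TopologicalSpace K] [LocallyCompactSpace K] [T2Space K] :
    ((∀ s : Set K, IsSigmaCompact s → IsCompact (closure s)) ↔
      (∀ f : C(K, ℂ), Tendsto f (cocompact K) (nhds 0) →
        ∃ K' : Set K, IsCompact K' ∧ ∀ t ∉ K', f t = 0)) ∧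
    ((∀ f : C(K, ℂ), Tendsto f (cocompact K) (nhds 0) →
        ∃ K' : Set K, IsCompact K' ∧ ∀ t ∉ K', f t = 0) ↔
      (∀ f : C(K, ℂ), ∀ c : ℂ, Tendsto f (cocompact K) (nhds c) →
        ∃ K' : Set K, IsCompact K' ∧ ∀ t ∉ K', f t = c)) := by
  refine ⟨⟨fun hi f hf => ?_, fun hii s hs => ?_⟩, ⟨fun hii f c hf => ?_, fun hiii f => hiii f 0⟩⟩
  · exact ⟨tsupport f, hi _ (isSigmaCompact_support_of_tendsto_cocompact_zero f.continuous hf),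
      fun _ => image_eq_zero_of_notMem_tsupport⟩
  · obtain ⟨g, hg0, hg_pos⟩ := exists_tendsto_cocompact_zero_pos_on_of_isSigmaCompact hs
    obtain ⟨K', hK', hgK'⟩ := hii ((Complex.ofRealCLM : C(ℝ, ℂ)).comp g)
      ((Complex.continuous_ofReal.tendsto' 0 0 Complex.ofReal_zero).comp hg0)
    refine hK'.closure_of_subset fun t ht => by_contra fun htK' => (hg_pos t ht).ne' ?_
    simpa using hgK' t htK'
  · obtain ⟨K', hK', hK'f⟩ := hii (f - .const K c) (by simpa using! hf.sub_const c)
    exact ⟨K', hK', fun t ht => sub_eq_zero.1 (hK'f t ht)⟩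
end

section
/- Let K be a locally compact Hausdorff space, A ⊆ K a closed subset (so A is locally compact Hausdorff), and (x_j)_{j∈J} a family in C₀(K) which is a frame with bounds 0 < c₁ ≤ c₂ in the state sense: for every regular Borel probability measure μ on K and every x ∈ C₀(K), the family (∫_K |x·x_j|² dμ)_{j∈J} is summable and c₁·∫_K |x|² dμ ≤ Σ_{j∈J} ∫_K |x·x_j|² dμ ≤ c₂·∫_K |x|² dμ. Then the family of restrictions (x_j|_A)_{j∈J}, which lies in C₀(A), is a frame with the same bounds c₁, c₂ in the state sense in C₀(A): for every regular Borel probability measure ν on A and every y ∈ C₀(A), the family (∫_A |y·(x_j|_A)|² dν)_{j∈J} is summable and c₁·∫_A |y|² dν ≤ Σ_{j∈J} ∫_A |y·(x_j|_A)|² dν ≤ c₂·∫_A |y|² dν. -/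
/-!
Extend `y ∈ C₀(A)` to some `v ∈ C₀(K)` by applying the Tietze extension theorem on the one-point
compactifications, and push the state `ν` on `A` forward to `K`. The pushforward along the closed
embedding `A ↪ K` is again a regular probability measure, and every integral in the frame
inequalities for `(ν, y)` equals the corresponding one for `(ν.map (↑), v)`.
-/

open ZeroAtInfty MeasureTheory

/-- A family `(x j)` in `C₀(K, ℂ)` is a frame with bounds `0 < c₁ ≤ c₂` in the state sense:
for every regular Borel probability measure `μ` on `K` and every `v ∈ C₀(K)` the family
`(∫ ‖v · x j‖² dμ)` is summable and
`c₁ · ∫ ‖v‖² dμ ≤ ∑' j, ∫ ‖v · x j‖² dμ ≤ c₂ · ∫ ‖v‖² dμ`. -/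
def IsStateFrame {K : Type*} [TopologicalSpace K] [MeasurableSpace K] {J : Type*}
    (x : J → C₀(K, ℂ)) (c₁ c₂ : ℝ) : Prop :=
  ∀ μ : Measure K, IsProbabilityMeasure μ → μ.Regular →
    ∀ v : C₀(K, ℂ),
      Summable (fun j : J => ∫ t, ‖v t * x j t‖ ^ 2 ∂μ) ∧
      c₁ * (∫ t, ‖v t‖ ^ 2 ∂μ) ≤ (∑' j : J, ∫ t, ‖v t * x j t‖ ^ 2 ∂μ) ∧
      (∑' j : J, ∫ t, ‖v t * x j t‖ ^ 2 ∂μ) ≤ c₂ * ∫ t, ‖v t‖ ^ 2 ∂μ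

universe u v

open Topology Filter Set

namespace MeasureTheory.Measure

variable {α β : Type*} [TopologicalSpace α] [MeasurableSpace α] [BorelSpace α]
  [TopologicalSpace β] [MeasurableSpace β] [BorelSpace β] {μ : Measure α} {f : α → β}

theorem OuterRegular.map_of_isClosedEmbedding [μ.OuterRegular] (hf : IsClosedEmbedding f) :
    (μ.map f).OuterRegular := by
  refine ⟨fun s _ r hr => ?_⟩
  rw [hf.measurableEmbedding.map_apply] at hr
  obtain ⟨U, hsU, hU, hμU⟩ := Set.exists_isOpen_lt_of_lt _ r hr
  obtain ⟨V, hV, rfl⟩ := hf.isInducing.isOpen_iff.mp hU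
  -- enlarging `V` by the open set `(range f)ᶜ` does not change its preimage
  refine ⟨V ∪ (range f)ᶜ, ?_, hV.union hf.isClosed_range.isOpen_compl, ?_⟩
  · intro y hy
    by_cases hyf : y ∈ range f
    · obtain ⟨x, rfl⟩ := hyf
      exact Or.inl (hsU hy)
    · exact Or.inr hyf
  · rwa [hf.measurableEmbedding.map_apply, preimage_union, preimage_compl, preimage_range,
      compl_univ, union_empty]

theorem Regular.map_of_isClosedEmbedding [μ.Regular] (hf : IsClosedEmbedding f) :
    (μ.map f).Regular := by
  have := OuterRegular.map_of_isClosedEmbedding (μ := μ) hf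
  have : IsFiniteMeasureOnCompacts (μ.map f) :=
    ⟨fun K hK => by
      rw [hf.measurableEmbedding.map_apply]
      exact (hf.isCompact_preimage hK).measure_lt_top⟩
  exact ⟨Regular.innerRegular.map hf.continuous.aemeasurable
    (fun U hU => hU.preimage hf.continuous) (fun K hK => hK.image hf.continuous)
    (fun U hU => hU.measurableSet)⟩

end MeasureTheory.Measure

open OnePoint in
theorem Topology.IsClosedEmbedding.exists_zeroAtInfty_extension {X : Type*} {Y : Type u}
    {E : Type v} [TopologicalSpace X] [TopologicalSpace Y] [WeaklyLocallyCompactSpace Y]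
    [T2Space Y] [TopologicalSpace E] [Zero E] [TietzeExtension.{u, v} E] {f : X → Y}
    (hf : IsClosedEmbedding f) (g : C₀(X, E)) : ∃ h : C₀(Y, E), ∀ x, h (f x) = g x := by
  have : T2Space X := hf.isEmbedding.t2Space
  have hg : Tendsto g (coclosedCompact X) (𝓝 0) := by
    rw [coclosedCompact_eq_cocompact]
    exact zero_at_infty g
  have hmap : IsClosedEmbedding (OnePoint.map f) :=
    (OnePoint.continuous_map hf.continuous (by simpa using hf.tendsto_cocompact)).isClosedEmbedding
      (Option.map_injective hf.injective)
  obtain ⟨h, hh⟩ := (continuousMapMk g.toContinuousMap 0 hg).exists_extension' hmap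
  have hh_infty : h ∞ = 0 := congrFun hh ∞
  refine ⟨⟨h.comp ⟨_, continuous_coe⟩, ?_⟩, fun x => congrFun hh x⟩
  simpa [hh_infty, ← coclosedCompact_eq_cocompact] using
    (h.continuous.tendsto ∞).comp tendsto_coe_infty

theorem isStateFrame_restrict_closed_general
    (K : Type*) [TopologicalSpace K] [LocallyCompactSpace K] [T2Space K]
    [MeasurableSpace K] [BorelSpace K]
    (A : Set K) (hA : IsClosed A)
    {J : Type*} (x : J → C₀(K, ℂ)) (c₁ c₂ : ℝ)
    (hx : IsStateFrame x c₁ c₂)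
    (xr : J → C₀(A, ℂ)) (hxr : ∀ (j : J) (t : A), xr j t = x j (t : K)) :
    IsStateFrame xr c₁ c₂ := by
  intro ν _ _ y
  have hι := hA.isClosedEmbedding_subtypeVal
  obtain ⟨v, hv⟩ := hι.exists_zeroAtInfty_extension y
  have hpull (g : K → ℝ) : ∫ t, g t ∂ν.map (↑) = ∫ a, g a ∂ν :=
    hι.measurableEmbedding.integral_map g
  obtain ⟨hsum, hlow, hup⟩ := hx (ν.map (↑)) (Measure.isProbabilityMeasure_map
    hι.continuous.aemeasurable) (Measure.Regular.map_of_isClosedEmbedding hι) v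
  simp only [hpull, hv, ← hxr] at hsum hlow hup
  exact ⟨hsum, hlow, hup⟩

/-- If `(x j)` is a frame with bounds `0 < c₁ ≤ c₂` in the state sense in `C₀(K)` and
`A ⊆ K` is closed, then the family of restrictions `(x j |_A)` (any family in `C₀(A)`
agreeing pointwise with the `x j` on `A`) is a frame with the same bounds in `C₀(A)`. -/
theorem isStateFrame_restrict_closed
    (K : Type*) [TopologicalSpace K] [LocallyCompactSpace K] [T2Space K]
    [MeasurableSpace K] [BorelSpace K]
    (A : Set K) (hA : IsClosed A)
    {J : Type*} (x : J → C₀(K, ℂ)) (c₁ c₂ : ℝ) (hc₁ : 0 < c₁) (hc₁₂ : c₁ ≤ c₂)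
    (hx : IsStateFrame x c₁ c₂)
    (xr : J → C₀(A, ℂ)) (hxr : ∀ (j : J) (t : A), xr j t = x j (t : K)) :
    IsStateFrame xr c₁ c₂ :=
  isStateFrame_restrict_closed_general K A hA x c₁ c₂ hx xr hxr
end

section
/- Let P₁ and P₂ be locally compact Hausdorff spaces, let (x_j)_{j∈J} in C₀(P₁) be a frame with bounds 0 < d₁ ≤ d₂ in the state sense, and let (y_i)_{i∈I} in C₀(P₂) be a frame with bounds 0 < c₁ ≤ c₂ in the state sense. Let K = P₁ ⊔ P₂ be the topological disjoint union and extend each x_j and each y_i to K by zero on the other summand. Then the combined family (x_j)_{j∈J} ∪ (y_i)_{i∈I} ⊆ C₀(K) is a frame in C₀(K) in the state sense with bounds min(d₁, c₁) and max(d₂, c₂): for every regular Borel probability measure μ on K and every w ∈ C₀(K), the family of integrals of |w·x_j|² and |w·y_i|² over K against μ is summable and min(d₁,c₁)·∫_K |w|² dμ ≤ (the total sum) ≤ max(d₂,c₂)·∫_K |w|² dμ. -/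
open ZeroAtInfty MeasureTheory

/-! The frame inequalities are homogeneous in the measure, so they hold for every finite regular
measure, not only for probability measures. A regular probability measure on `P₁ ⊔ P₂` pulls back
along the open embeddings `inl`, `inr` to finite regular measures on the summands, every integral
over the union splits into the two pulled-back integrals, and for `v * x'ⱼ` (resp. `v * y'ᵢ`) only
one of them survives. Adding the inequalities of the two frames, tested against the restrictions of
`v`, gives the bounds `min d₁ c₁` and `max d₂ c₂`. -/

open Topology
open scoped BoundedContinuousFunction

def FrameBounds {J : Type*} (S : J → ℝ) (c₁ c₂ A : ℝ) : Prop :=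
  Summable S ∧ c₁ * A ≤ ∑' j, S j ∧ ∑' j, S j ≤ c₂ * A

namespace FrameBounds

variable {J I : Type*} {S : J → ℝ} {T : I → ℝ} {c₁ c₂ d₁ d₂ A B : ℝ}

theorem mul_left (h : FrameBounds S c₁ c₂ A) {r : ℝ} (hr : 0 ≤ r) :
    FrameBounds (fun j => r * S j) c₁ c₂ (r * A) := by
  obtain ⟨hS, hlow, hup⟩ := h
  refine ⟨hS.mul_left r, ?_, ?_⟩
  · rw [tsum_mul_left, mul_left_comm]
    exact mul_le_mul_of_nonneg_left hlow hr
  · rw [tsum_mul_left, mul_left_comm c₂]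
    exact mul_le_mul_of_nonneg_left hup hr

theorem sumElim (hS : FrameBounds S d₁ d₂ A) (hT : FrameBounds T c₁ c₂ B) (hA : 0 ≤ A)
    (hB : 0 ≤ B) : FrameBounds (Sum.elim S T) (min d₁ c₁) (max d₂ c₂) (A + B) := by
  obtain ⟨hSs, hSlow, hSup⟩ := hS
  obtain ⟨hTs, hTlow, hTup⟩ := hT
  have hsum : HasSum (Sum.elim S T) (∑' j, S j + ∑' i, T i) :=
    HasSum.sum (f := Sum.elim S T) hSs.hasSum hTs.hasSum
  refine ⟨hsum.summable, ?_, ?_⟩ <;> rw [hsum.tsum_eq]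
  · linarith [mul_le_mul_of_nonneg_right (min_le_left d₁ c₁) hA,
      mul_le_mul_of_nonneg_right (min_le_right d₁ c₁) hB]
  · linarith [mul_le_mul_of_nonneg_right (le_max_left d₂ c₂) hA,
      mul_le_mul_of_nonneg_right (le_max_right d₂ c₂) hB]

end FrameBounds

theorem IsStateFrame.frameBounds_of_isFiniteMeasure {K : Type*} [TopologicalSpace K]
    [MeasurableSpace K] {J : Type*} {x : J → C₀(K, ℂ)} {c₁ c₂ : ℝ}
    (hx : IsStateFrame x c₁ c₂) (ν : Measure K) [IsFiniteMeasure ν] (hν : ν.Regular)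
    (v : C₀(K, ℂ)) :
    FrameBounds (fun j => ∫ t, ‖v t * x j t‖ ^ 2 ∂ν) c₁ c₂ (∫ t, ‖v t‖ ^ 2 ∂ν) := by
  rcases eq_zero_or_neZero ν with rfl | _
  · simp [FrameBounds]
  set ν' : Measure K := (ν Set.univ)⁻¹ • ν
  have hν' : ν = ν Set.univ • ν' := by
    rw [smul_smul, ENNReal.mul_inv_cancel (NeZero.ne _) (measure_ne_top _ _), one_smul]
  have hprob : FrameBounds (fun j => ∫ t, ‖v t * x j t‖ ^ 2 ∂ν') c₁ c₂ (∫ t, ‖v t‖ ^ 2 ∂ν') :=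
    hx ν' inferInstance (hν.smul (ENNReal.inv_ne_top.mpr (NeZero.ne _))) v
  rw [hν']
  simpa only [integral_smul_measure, smul_eq_mul] using hprob.mul_left ENNReal.toReal_nonneg

theorem BoundedContinuousFunction.integrable_norm_pow {X E : Type*} [TopologicalSpace X]
    [MeasurableSpace X] [OpensMeasurableSpace X] [NormedAddCommGroup E]
    [SecondCountableTopologyEither X E] (μ : Measure X) [IsFiniteMeasure μ] (f : X →ᵇ E)
    (p : ℕ) : Integrable (fun t => ‖f t‖ ^ p) μ :=
  (memLp_top_of_bound f.continuous.aestronglyMeasurable ‖f‖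
    (Filter.Eventually.of_forall f.norm_coe_le_norm)).mono_exponent le_top |>.integrable_norm_pow'

theorem integral_eq_integral_comap_inl_add_integral_comap_inr {α β E : Type*}
    [MeasurableSpace α] [MeasurableSpace β] [MeasurableSpace (α ⊕ β)] [NormedAddCommGroup E]
    [NormedSpace ℝ E] (hl : MeasurableEmbedding (Sum.inl : α → α ⊕ β))
    (hr : MeasurableEmbedding (Sum.inr : β → α ⊕ β)) {μ : Measure (α ⊕ β)} {g : α ⊕ β → E}
    (hg : Integrable g μ) :
    ∫ t, g t ∂μ = ∫ t, g (Sum.inl t) ∂μ.comap Sum.inl + ∫ t, g (Sum.inr t) ∂μ.comap Sum.inr := by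
  rw [← integral_add_compl hl.measurableSet_range hg, Set.compl_range_inl,
    ← hl.integral_map, hl.map_comap, ← hr.integral_map, hr.map_comap]

def Topology.IsClosedEmbedding.toCocompactMap {α β : Type*} [TopologicalSpace α]
    [TopologicalSpace β] {f : α → β} (hf : IsClosedEmbedding f) : CocompactMap α β :=
  ⟨⟨f, hf.continuous⟩, hf.tendsto_cocompact⟩

@[simp]
theorem Topology.IsClosedEmbedding.coe_toCocompactMap {α β : Type*} [TopologicalSpace α]
    [TopologicalSpace β] {f : α → β} (hf : IsClosedEmbedding f) : ⇑hf.toCocompactMap = f :=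
  rfl

theorem isStateFrame_sum_general
    (P₁ : Type*) [TopologicalSpace P₁]
    [MeasurableSpace P₁] [BorelSpace P₁]
    (P₂ : Type*) [TopologicalSpace P₂]
    [MeasurableSpace P₂] [BorelSpace P₂]
    [MeasurableSpace (P₁ ⊕ P₂)] [BorelSpace (P₁ ⊕ P₂)]
    {J I : Type*}
    (x : J → C₀(P₁, ℂ)) (d₁ d₂ : ℝ)
    (hx : IsStateFrame x d₁ d₂)
    (y : I → C₀(P₂, ℂ)) (c₁ c₂ : ℝ)
    (hy : IsStateFrame y c₁ c₂)
    (x' : J → C₀(P₁ ⊕ P₂, ℂ)) (y' : I → C₀(P₁ ⊕ P₂, ℂ))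
    (hx' : ∀ (j : J), (∀ t : P₁, x' j (Sum.inl t) = x j t) ∧ ∀ t : P₂, x' j (Sum.inr t) = 0)
    (hy' : ∀ (i : I), (∀ t : P₂, y' i (Sum.inr t) = y i t) ∧ ∀ t : P₁, y' i (Sum.inl t) = 0) :
    IsStateFrame (Sum.elim x' y') (min d₁ c₁) (max d₂ c₂) := by
  intro μ _ hμ v
  have split (f : C₀(P₁ ⊕ P₂, ℂ)) := integral_eq_integral_comap_inl_add_integral_comap_inr
    IsOpenEmbedding.inl.measurableEmbedding IsOpenEmbedding.inr.measurableEmbedding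
    (g := fun t => ‖f t‖ ^ 2) (f.toBCF.integrable_norm_pow μ 2)
  set w₁ : C₀(P₁, ℂ) := v.comp IsClosedEmbedding.inl.toCocompactMap
  set w₂ : C₀(P₂, ℂ) := v.comp IsClosedEmbedding.inr.toCocompactMap
  have hterm : (fun k => ∫ t, ‖v t * Sum.elim x' y' k t‖ ^ 2 ∂μ) =
      Sum.elim (fun j => ∫ t, ‖w₁ t * x j t‖ ^ 2 ∂μ.comap Sum.inl)
        (fun i => ∫ t, ‖w₂ t * y i t‖ ^ 2 ∂μ.comap Sum.inr) := by
    ext (j | i)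
    · simpa [w₁, (hx' j).1, (hx' j).2] using split (v * x' j)
    · simpa [w₂, (hy' i).1, (hy' i).2] using split (v * y' i)
  rw [hterm, split v]
  exact (hx.frameBounds_of_isFiniteMeasure _ (hμ.comap' μ IsOpenEmbedding.inl) w₁).sumElim
    (hy.frameBounds_of_isFiniteMeasure _ (hμ.comap' μ IsOpenEmbedding.inr) w₂)
    (integral_nonneg fun _ => by positivity) (integral_nonneg fun _ => by positivity)

/-- Let `(x j)` be a frame in `C₀(P₁)` with bounds `0 < d₁ ≤ d₂` and `(y i)` a frame in
`C₀(P₂)` with bounds `0 < c₁ ≤ c₂`, both in the state sense. Extending each family by zero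
to the topological disjoint union `K = P₁ ⊔ P₂`, the combined family indexed by `J ⊕ I`
is a frame in `C₀(K)` in the state sense with bounds `min d₁ c₁` and `max d₂ c₂`. -/
theorem isStateFrame_sum
    (P₁ : Type*) [TopologicalSpace P₁] [LocallyCompactSpace P₁] [T2Space P₁]
    [MeasurableSpace P₁] [BorelSpace P₁]
    (P₂ : Type*) [TopologicalSpace P₂] [LocallyCompactSpace P₂] [T2Space P₂]
    [MeasurableSpace P₂] [BorelSpace P₂]
    [MeasurableSpace (P₁ ⊕ P₂)] [BorelSpace (P₁ ⊕ P₂)]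
    {J I : Type*}
    (x : J → C₀(P₁, ℂ)) (d₁ d₂ : ℝ) (hd₁ : 0 < d₁) (hd₁₂ : d₁ ≤ d₂)
    (hx : IsStateFrame x d₁ d₂)
    (y : I → C₀(P₂, ℂ)) (c₁ c₂ : ℝ) (hc₁ : 0 < c₁) (hc₁₂ : c₁ ≤ c₂)
    (hy : IsStateFrame y c₁ c₂)
    (x' : J → C₀(P₁ ⊕ P₂, ℂ)) (y' : I → C₀(P₁ ⊕ P₂, ℂ))
    (hx' : ∀ (j : J), (∀ t : P₁, x' j (Sum.inl t) = x j t) ∧ ∀ t : P₂, x' j (Sum.inr t) = 0)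
    (hy' : ∀ (i : I), (∀ t : P₂, y' i (Sum.inr t) = y i t) ∧ ∀ t : P₁, y' i (Sum.inl t) = 0) :
    IsStateFrame (Sum.elim x' y') (min d₁ c₁) (max d₂ c₂) :=
  isStateFrame_sum_general P₁ P₂ x d₁ d₂ hx y c₁ c₂ hy x' y' hx' hy'
end

section
/- Let K be a locally compact Hausdorff space which is not σ-compact, and let (f_n)_{n∈ℕ} be any countable family of functions in C₀(K). Then the common zero set F = {t ∈ K : f_n(t) = 0 for all n ∈ ℕ} is uncountable (in particular nonempty). Consequently, no countable family of functions in C₀(K) separates the points of K. -/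
open ZeroAtInfty Set Topology

/-- If `K` is a locally compact Hausdorff space which is not `σ`-compact, then for any
countable family `(f n)` of functions in `C₀(K)` the common zero set is uncountable
(in particular nonempty); consequently no countable family of functions in `C₀(K)`
separates the points of `K`. -/
theorem common_zero_set_uncountable_of_not_sigmaCompact
    (K : Type*) [TopologicalSpace K] [LocallyCompactSpace K] [T2Space K]
    (hK : ¬ SigmaCompactSpace K) (f : ℕ → C₀(K, ℂ)) :
    ¬ ({t : K | ∀ n : ℕ, f n t = 0}).Countable ∧
      ∃ s t : K, s ≠ t ∧ ∀ n : ℕ, f n s = f n t := by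
  set Z : Set K := {t : K | ∀ n : ℕ, f n t = 0} with hZdef
  -- superlevel sets are compact
  have hC : ∀ (n m : ℕ), IsCompact {x : K | (1 : ℝ) / (m + 1) ≤ ‖f n x‖} := by
    intro n m
    have hpos : (0 : ℝ) < 1 / (m + 1) := by positivity
    have h : Filter.Tendsto (fun x => ‖f n x‖) (Filter.cocompact K) (𝓝 0) := by
      simpa using (zero_at_infty (f n)).norm
    have hmem : {x : K | ‖f n x‖ < 1 / (m + 1)} ∈ Filter.cocompact K := by
      have := h (Metric.ball_mem_nhds (0 : ℝ) hpos)
      refine Filter.mem_of_superset this ?_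
      intro x hx
      simpa [Real.norm_eq_abs, abs_of_nonneg (norm_nonneg _)] using hx
    obtain ⟨C, hCc, hCs⟩ := Filter.mem_cocompact.mp hmem
    refine hCc.of_isClosed_subset ?_ ?_
    · exact isClosed_le continuous_const (continuous_norm.comp (map_continuous (f n)))
    · intro x hx
      by_contra hxC
      have h2 := hCs hxC
      simp only [mem_setOf_eq] at h2
      exact absurd h2 (not_lt.mpr hx)
  have key : ¬ Z.Countable := by
    intro hZc
    apply hK
    rw [← isSigmaCompact_univ_iff]
    have huniv : (univ : Set K) = Z ∪ ⋃ (p : ℕ × ℕ), {x : K | (1 : ℝ) / (p.2 + 1) ≤ ‖f p.1 x‖} := by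
      apply Subset.antisymm _ (subset_univ _)
      intro x _
      by_cases hx : x ∈ Z
      · exact Or.inl hx
      · right
        simp only [hZdef, mem_setOf_eq, not_forall] at hx
        obtain ⟨n, hn⟩ := hx
        have hpos : 0 < ‖f n x‖ := norm_pos_iff.mpr hn
        obtain ⟨m, hm⟩ := exists_nat_one_div_lt hpos
        exact mem_iUnion.mpr ⟨(n, m), le_of_lt hm⟩
    rw [huniv]
    have h1 : IsSigmaCompact Z := by
      have : Z = ⋃ x ∈ Z, {x} := by simp
      rw [this]
      exact isSigmaCompact_biUnion hZc fun x _ => isCompact_singleton.isSigmaCompact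
    have h2 : IsSigmaCompact (⋃ (p : ℕ × ℕ), {x : K | (1 : ℝ) / (p.2 + 1) ≤ ‖f p.1 x‖}) :=
      isSigmaCompact_iUnion_of_isCompact _ fun p => hC p.1 p.2
    obtain ⟨A, hA, hAu⟩ := h1
    obtain ⟨B, hB, hBu⟩ := h2
    refine ⟨fun n => A n ∪ B n, fun n => (hA n).union (hB n), ?_⟩
    rw [iUnion_union_distrib, hAu, hBu]
  refine ⟨key, ?_⟩
  have hne : ¬ Z.Subsingleton := fun h => key h.countable
  rw [not_subsingleton_iff] at hne
  obtain ⟨s, hs, t, ht, hst⟩ := hne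
  exact ⟨s, t, hst, fun n => (hs n).trans (ht n).symm⟩
end

section
/- Let K be a locally compact Hausdorff space which is not σ-compact, let (K_n)_{n∈ℕ} be any countable collection of compact subsets of K, and let (f_n)_{n∈ℕ} be any countable family of functions in C₀(K). Then the set F = {t ∈ K \ ⋃_{n∈ℕ} K_n : f_n(t) = 0 for all n ∈ ℕ} is uncountable (in particular nonempty). -/
open ZeroAtInfty

/-- If `K` is a locally compact Hausdorff space which is not `σ`-compact, `(Kc n)` is a
countable collection of compact subsets of `K`, and `(f n)` is a countable family of
functions in `C₀(K)`, then the set of points outside `⋃ n, Kc n` at which all the `f n`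
vanish is uncountable (in particular nonempty). -/
theorem common_zero_set_off_compacts_uncountable_of_not_sigmaCompact
    (K : Type*) [TopologicalSpace K] [LocallyCompactSpace K] [T2Space K]
    (hK : ¬ SigmaCompactSpace K)
    (Kc : ℕ → Set K) (hKc : ∀ n, IsCompact (Kc n))
    (f : ℕ → C₀(K, ℂ)) :
    ¬ ({t : K | t ∉ (⋃ n, Kc n) ∧ ∀ n : ℕ, f n t = 0}).Countable := by
  intro hS
  apply hK
  set S := {t : K | t ∉ (⋃ n, Kc n) ∧ ∀ n : ℕ, f n t = 0} with hSdef
  have key : ∀ n m : ℕ, IsCompact {x : K | (1:ℝ)/(m+1) ≤ ‖f n x‖} := by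
    intro n m
    have ht := (f n).zero_at_infty'
    rw [NormedAddCommGroup.tendsto_nhds_zero] at ht
    have hm : (0:ℝ) < 1/(m+1) := by positivity
    obtain ⟨t, htc, hts⟩ := Filter.mem_cocompact.mp (ht _ hm)
    refine htc.of_isClosed_subset (isClosed_le continuous_const (f n).continuous.norm) ?_
    intro x hx
    by_contra hxt
    have := hts hxt
    simp only [Set.mem_setOf_eq] at this
    exact not_lt.mpr hx this
  haveI := hS.to_subtype
  set C : (↥S ⊕ ℕ) ⊕ ℕ × ℕ → Set K := fun i => match i with
    | .inl (.inl x) => {(x : K)}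
    | .inl (.inr n) => Kc n
    | .inr p => {x : K | (1:ℝ)/(p.2+1) ≤ ‖f p.1 x‖} with hC
  have hu : ⋃ i, C i = Set.univ := by
    apply Set.eq_univ_of_forall
    intro x
    by_cases h1 : x ∈ ⋃ n, Kc n
    · obtain ⟨_, ⟨n, rfl⟩, hn⟩ := h1
      exact Set.mem_iUnion.mpr ⟨.inl (.inr n), hn⟩
    by_cases h2 : ∀ n : ℕ, f n x = 0
    · exact Set.mem_iUnion.mpr ⟨.inl (.inl ⟨x, h1, h2⟩), rfl⟩
    · push_neg at h2
      obtain ⟨n, hn⟩ := h2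
      have hpos : (0:ℝ) < ‖f n x‖ := norm_pos_iff.mpr hn
      obtain ⟨m, hm⟩ := exists_nat_one_div_lt hpos
      exact Set.mem_iUnion.mpr ⟨.inr (n, m), le_of_lt hm⟩
  rw [← isSigmaCompact_univ_iff, ← hu]
  refine isSigmaCompact_iUnion_of_isCompact C ?_
  rintro ((x | n) | p)
  · exact isCompact_singleton
  · exact hKc _
  · exact key _ _
end
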